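/- arXiv:math/0609572 — 7 statements merged into one kernel-verified Lean document; each statement's English description precedes it below -/
import Mathlib

section
/- For any graph G on n vertices with adjacency matrix eigenvalues μ₁ ≥ ... ≥ μ_n and any partition [n] = P₁ ∪ ... ∪ P_k into nonempty sets, we have μ₁ + ... + μ_k ≥ Σᵢ 2e(Pᵢ)/|Pᵢ|, where e(Pᵢ) is the number of edges of G inside Pᵢ. -/
/-!
Put `yᵢ = |Pᵢ|^{-1/2} 𝟙_{Pᵢ}`. Since the parts are disjoint and nonempty the `yᵢ` are orthonormal,
and `⟪yᵢ, A yᵢ⟫ = 2e(Pᵢ)/|Pᵢ|`, so the claim is Ky Fan's inequality: the sum of the Rayleigh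
quotients of `k` orthonormal vectors is at most the sum of the `k` largest eigenvalues. Expanding in
an orthonormal eigenbasis `(uⱼ)`, that sum is `∑ⱼ μⱼ cⱼ` with `cⱼ = ∑ᵢ ⟪uⱼ, yᵢ⟫²`; Bessel gives
`cⱼ ≤ 1` and Parseval `∑ⱼ cⱼ = k`, and a linear function of such weights is largest when the weight
sits on the `k` largest `μⱼ`.
-/

/-- The part of the partition `P : Fin n → Fin k` with index `i`. -/
def partSet {n k : ℕ} (P : Fin n → Fin k) (i : Fin k) : Finset (Fin n) :=
  Finset.univ.filter (fun v => P v = i)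

/-- Number of ordered adjacent pairs `(u,v)` with `u ∈ X`, `v ∈ Y`.
For `X = Y` this is `2 e(X)`; for disjoint `X`, `Y` it is `e(X,Y)`. -/
def pairCount {n : ℕ} (G : SimpleGraph (Fin n)) [DecidableRel G.Adj]
    (X Y : Finset (Fin n)) : ℕ :=
  ∑ u ∈ X, ∑ v ∈ Y, if G.Adj u v then 1 else 0

open Finset Function Matrix RCLike
open scoped InnerProductSpace

theorem Finset.sum_mul_le_sum_of_forall_le {ι : Type*} [Fintype ι] [DecidableEq ι]
    (S : Finset ι) (μ d : ι → ℝ) (t : ℝ) (hS : ∀ j ∈ S, t ≤ μ j) (hSc : ∀ j ∉ S, μ j ≤ t)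
    (hd₀ : ∀ j, 0 ≤ d j) (hd₁ : ∀ j, d j ≤ 1) (hd : ∑ j, d j = #S) :
    ∑ j, μ j * d j ≤ ∑ j ∈ S, μ j := by
  have key : 0 ≤ ∑ j, (μ j - t) * ((if j ∈ S then 1 else 0) - d j) := by
    refine sum_nonneg fun j _ => ?_
    by_cases hj : j ∈ S
    · simp only [hj, if_true]; nlinarith [hS j hj, hd₁ j]
    · simp only [hj, if_false]; nlinarith [hSc j hj, hd₀ j]
  simp only [mul_sub, sub_mul, sum_sub_distrib, mul_ite, mul_one, mul_zero, sum_ite_mem,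
    univ_inter, ← mul_sum, hd, sum_const, nsmul_eq_mul] at key
  linarith

theorem Antitone.sum_mul_le_sum_castLE {n k : ℕ} (hkn : k < n) {μ : Fin n → ℝ} (hμ : Antitone μ)
    (d : Fin n → ℝ) (hd₀ : ∀ j, 0 ≤ d j) (hd₁ : ∀ j, d j ≤ 1) (hd : ∑ j, d j = k) :
    ∑ j, μ j * d j ≤ ∑ i : Fin k, μ (Fin.castLE hkn.le i) := by
  have hS : univ.map (Fin.castLEEmb hkn.le) = univ.filter (fun j : Fin n => (j : ℕ) < k) := by
    ext j
    simp only [mem_map, mem_univ, true_and, mem_filter, Fin.castLEEmb_apply]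
    exact ⟨by rintro ⟨i, rfl⟩; exact i.isLt, fun hj => ⟨⟨j, hj⟩, rfl⟩⟩
  rw [show ∑ i : Fin k, μ (Fin.castLE hkn.le i) = ∑ j ∈ univ.map (Fin.castLEEmb hkn.le), μ j
    by rw [sum_map]; rfl, hS]
  refine sum_mul_le_sum_of_forall_le _ μ d (μ ⟨k, hkn⟩) (fun j hj => hμ ?_) (fun j hj => hμ ?_)
    hd₀ hd₁ ?_
  · simp only [mem_filter, mem_univ, true_and] at hj; exact Fin.mk_le_mk.2 hj.le
  · simp only [mem_filter, mem_univ, true_and, not_lt] at hj; exact hj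
  · rw [hd, ← hS, card_map, card_univ, Fintype.card_fin]

section KyFan

variable {𝕜 E ι : Type*} [RCLike 𝕜] [NormedAddCommGroup E] [InnerProductSpace 𝕜 E] [Fintype ι]
  {T : E →ₗ[𝕜] E} {u : OrthonormalBasis ι 𝕜 E} {ν : ι → ℝ}

theorem LinearMap.IsSymmetric.re_inner_map_self_eq_sum (hT : T.IsSymmetric)
    (hu : ∀ j, T (u j) = (ν j : 𝕜) • u j) (x : E) :
    re ⟪x, T x⟫_𝕜 = ∑ j, ν j * ‖⟪u j, x⟫_𝕜‖ ^ 2 := by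
  rw [← u.sum_inner_mul_inner x (T x), map_sum]
  refine sum_congr rfl fun j _ => ?_
  rw [← hT, hu, inner_smul_left, conj_ofReal, mul_left_comm, ← inner_conj_symm, RCLike.conj_mul,
    ← ofReal_pow, ← ofReal_mul, ofReal_re]

theorem LinearMap.IsSymmetric.sum_re_inner_map_self_le {n k : ℕ} (hkn : k < n)
    (hT : T.IsSymmetric) (hu : ∀ j, T (u j) = (ν j : 𝕜) • u j)
    {μ : Fin n → ℝ} (hμ : Antitone μ) (σ : Fin n ≃ ι) (hσ : μ = ν ∘ σ)
    {y : Fin k → E} (hy : Orthonormal 𝕜 y) :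
    ∑ i, re ⟪y i, T (y i)⟫_𝕜 ≤ ∑ i : Fin k, μ (Fin.castLE hkn.le i) := by
  set c : ι → ℝ := fun j => ∑ i, ‖⟪u j, y i⟫_𝕜‖ ^ 2
  have hc₁ : ∀ j, c j ≤ 1 := fun j => by
    simpa [c, norm_inner_symm, u.orthonormal.1 j] using hy.sum_inner_products_le (u j) (s := univ)
  have hc : ∑ j, c j = k := by
    simp only [c]
    rw [sum_comm]
    simp [u.sum_sq_norm_inner_right, hy.1]
  calc ∑ i, re ⟪y i, T (y i)⟫_𝕜 = ∑ j, ν j * c j := by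
        simp only [hT.re_inner_map_self_eq_sum hu, c, mul_sum]
        exact sum_comm
    _ = ∑ m, μ m * c (σ m) := by rw [hσ, ← σ.sum_comp]; rfl
    _ ≤ _ := hμ.sum_mul_le_sum_castLE hkn _ (fun m => by positivity) (fun m => hc₁ _)
        (by rw [σ.sum_comp, hc])

end KyFan

theorem Matrix.IsHermitian.toEuclideanLin_eigenvectorBasis {𝕜 ι : Type*} [RCLike 𝕜] [Fintype ι]
    [DecidableEq ι] {A : Matrix ι ι 𝕜} (hA : A.IsHermitian) (j : ι) :
    A.toEuclideanLin (hA.eigenvectorBasis j) = (hA.eigenvalues j : 𝕜) • hA.eigenvectorBasis j := by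
  ext1
  rw [toLpLin_apply, WithLp.ofLp_toLp, hA.mulVec_eigenvectorBasis, WithLp.ofLp_smul,
    RCLike.real_smul_eq_coe_smul (K := 𝕜)]

section IndicatorVector

variable {ι : Type*} [Fintype ι] [DecidableEq ι]

def Finset.indicatorVec (X : Finset ι) : EuclideanSpace ℝ ι :=
  WithLp.toLp 2 fun v => if v ∈ X then 1 else 0

theorem Finset.inner_indicatorVec (X Y : Finset ι) :
    ⟪X.indicatorVec, Y.indicatorVec⟫_ℝ = #(X ∩ Y) := by
  simp [indicatorVec, PiLp.inner_apply, sum_ite_mem]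

theorem Finset.inner_indicatorVec_toEuclideanLin (A : Matrix ι ι ℝ) (X Y : Finset ι) :
    ⟪X.indicatorVec, A.toEuclideanLin Y.indicatorVec⟫_ℝ = ∑ u ∈ X, ∑ v ∈ Y, A u v := by
  simp [indicatorVec, PiLp.inner_apply, toLpLin_apply, mulVec, dotProduct, sum_ite_mem]

theorem orthonormal_normalized_indicatorVec {κ : Type*} {X : κ → Finset ι}
    (hX : Pairwise (Disjoint on X)) (hne : ∀ i, (X i).Nonempty) :
    Orthonormal ℝ (fun i => (√(#(X i) : ℝ))⁻¹ • (X i).indicatorVec) := by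
  classical
  rw [orthonormal_iff_ite]
  intro i j
  rw [real_inner_smul_left, real_inner_smul_right, inner_indicatorVec]
  split_ifs with h
  · subst h
    have hpos : (0 : ℝ) < #(X i) := by exact_mod_cast (hne i).card_pos
    rw [inter_self]
    field_simp
    rw [Real.sq_sqrt hpos.le]
  · simp [disjoint_iff_inter_eq_empty.1 (hX h)]

end IndicatorVector

theorem pairCount_eq_sum_adjMatrix {n : ℕ} (G : SimpleGraph (Fin n)) [DecidableRel G.Adj]
    (X Y : Finset (Fin n)) : (pairCount G X Y : ℝ) = ∑ u ∈ X, ∑ v ∈ Y, G.adjMatrix ℝ u v := by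
  simp [pairCount, SimpleGraph.adjMatrix_apply]

theorem stmt0_general {n k : ℕ} (hkn : k < n)
    (G : SimpleGraph (Fin n)) [DecidableRel G.Adj]
    (hA : (G.adjMatrix ℝ).IsHermitian)
    (μ : Fin n → ℝ) (hmono : Antitone μ)
    (hperm : ∃ σ : Equiv.Perm (Fin n), μ = hA.eigenvalues ∘ σ)
    (P : Fin n → Fin k) (hsurj : Function.Surjective P) :
    ∑ i : Fin k, (pairCount G (partSet P i) (partSet P i) : ℝ) / (partSet P i).card
      ≤ ∑ i : Fin k, μ (Fin.castLE hkn.le i) := by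
  obtain ⟨σ, hσ⟩ := hperm
  have hdisj : Pairwise (Disjoint on partSet P) := fun i j hij =>
    disjoint_filter.2 fun v _ hi hj => hij (hi ▸ hj)
  have hne : ∀ i, (partSet P i).Nonempty := fun i =>
    (hsurj i).imp fun v hv => by simp [partSet, hv]
  refine le_of_eq_of_le ?_ ((isSymmetric_toEuclideanLin_iff.2 hA).sum_re_inner_map_self_le hkn
    hA.toEuclideanLin_eigenvectorBasis hmono σ hσ (orthonormal_normalized_indicatorVec hdisj hne))
  refine sum_congr rfl fun i _ => ?_
  have hcard : (0 : ℝ) ≤ #(partSet P i) := by positivity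
  rw [re_to_real, real_inner_smul_left, map_smul, real_inner_smul_right,
    inner_indicatorVec_toEuclideanLin, ← pairCount_eq_sum_adjMatrix, ← mul_assoc, ← mul_inv,
    Real.mul_self_sqrt hcard, div_eq_inv_mul]

/-- for a graph `G` on `[n]` with adjacency eigenvalues
`μ 0 ≥ μ 1 ≥ ⋯ ≥ μ (n-1)` and a partition of `[n]` into `k` nonempty parts,
`μ₁ + ⋯ + μ_k ≥ ∑ i, 2 e(P i) / |P i|`. -/
theorem stmt0 {n k : ℕ} (hk : 1 < k) (hkn : k < n)
    (G : SimpleGraph (Fin n)) [DecidableRel G.Adj]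
    (hA : (G.adjMatrix ℝ).IsHermitian)
    (μ : Fin n → ℝ) (hmono : Antitone μ)
    (hperm : ∃ σ : Equiv.Perm (Fin n), μ = hA.eigenvalues ∘ σ)
    (P : Fin n → Fin k) (hsurj : Function.Surjective P) :
    ∑ i : Fin k, (pairCount G (partSet P i) (partSet P i) : ℝ) / (partSet P i).card
      ≤ ∑ i : Fin k, μ (Fin.castLE hkn.le i) :=
  stmt0_general hkn G hA μ hmono hperm P hsurj
end

section
/- For any graph G on n vertices and any partition [n] = P₁ ∪ ... ∪ P_k into nonempty sets, μ_{n-k+2}(G) + ... + μ_n(G) ≤ Σᵢ 2e(Pᵢ)/|Pᵢ| − 2e(G)/n, where μ₁ ≥ ... ≥ μ_n are the adjacency eigenvalues. -/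
open Matrix Finset

/- ### Auxiliary matrix lemmas -/

lemma aux_trace_vecMulVec_mul {n : ℕ} (a b : Fin n → ℝ) (M : Matrix (Fin n) (Fin n) ℝ) :
    (vecMulVec a b * M).trace = b ⬝ᵥ (M *ᵥ a) := by
  simp [Matrix.trace, Matrix.mul_apply, vecMulVec_apply, dotProduct, mulVec,
    Finset.mul_sum, Finset.sum_mul]
  rw [Finset.sum_comm]
  congr 1; ext j; congr 1; ext c; ring

lemma aux_trace_vecMulVec {n : ℕ} (a b : Fin n → ℝ) : (vecMulVec a b).trace = a ⬝ᵥ b := by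
  simp [Matrix.trace, vecMulVec_apply, dotProduct, Matrix.diag]

lemma aux_mul_vecMulVec {n : ℕ} (M : Matrix (Fin n) (Fin n) ℝ) (a b : Fin n → ℝ) :
    M * vecMulVec a b = vecMulVec (M *ᵥ a) b := by
  ext i j
  simp [Matrix.mul_apply, vecMulVec_apply, mulVec, dotProduct, Finset.sum_mul]
  congr 1; ext c; ring

lemma aux_vecMulVec_mul_vecMulVec {n : ℕ} (a b c d : Fin n → ℝ) :
    vecMulVec a b * vecMulVec c d = (b ⬝ᵥ c) • vecMulVec a d := by
  ext i j
  simp [Matrix.mul_apply, vecMulVec_apply, dotProduct, Finset.sum_mul, Finset.mul_sum]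
  congr 1; ext l; ring

lemma aux_trace_mul_diagonal {n : ℕ} (M : Matrix (Fin n) (Fin n) ℝ) (d : Fin n → ℝ) :
    (M * diagonal d).trace = ∑ j, M j j * d j := by
  simp [Matrix.trace, Matrix.mul_apply, Matrix.diag, Matrix.diagonal]

lemma aux_card_filter_le_val (n a : ℕ) :
    ((Finset.univ : Finset (Fin n)).filter fun j : Fin n => a ≤ (j : ℕ)).card = n - a := by
  have himg : (((Finset.univ : Finset (Fin n)).filter fun j : Fin n => a ≤ (j : ℕ)).image Fin.val)
      = Finset.Ico a n := by
    ext x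
    simp only [Finset.mem_image, Finset.mem_filter, Finset.mem_univ, true_and, Finset.mem_Ico]
    constructor
    · rintro ⟨j, hj, rfl⟩; exact ⟨hj, j.isLt⟩
    · rintro ⟨h1, h2⟩; exact ⟨⟨x, h2⟩, h1, rfl⟩
  have := congrArg Finset.card himg
  rwa [Finset.card_image_of_injective _ Fin.val_injective, Nat.card_Ico] at this

/-- The weighted Ky Fan-type threshold inequality. -/
lemma aux_threshold (n m : ℕ) (hm : 0 < m) (hmn : m < n) (μ c : Fin n → ℝ)
    (hmono : Antitone μ) (hc0 : ∀ j, 0 ≤ c j) (hc1 : ∀ j, c j ≤ 1)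
    (hcs : ∑ j, c j = m) :
    ∑ j ∈ Finset.univ.filter (fun j : Fin n => n - m ≤ (j : ℕ)), μ j ≤ ∑ j, μ j * c j := by
  set S := Finset.univ.filter (fun j : Fin n => n - m ≤ (j : ℕ)) with hS
  have hcard : S.card = m := by
    rw [hS, aux_card_filter_le_val n (n - m)]; omega
  set t := μ ⟨n - m, by omega⟩ with ht
  have key : ∀ j : Fin n, (if j ∈ S then μ j - μ j * c j else - (μ j * c j)) ≤
      t * (if j ∈ S then 1 - c j else - c j) := by
    intro j
    by_cases hj : j ∈ S
    · simp only [hj, if_pos]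
      have hμ : μ j ≤ t := hmono (by simp only [hS, Finset.mem_filter] at hj; exact hj.2)
      nlinarith [hc1 j, hc0 j]
    · simp only [hj, if_neg, not_false_iff]
      have hμ : t ≤ μ j := by
        apply hmono
        simp only [hS, Finset.mem_filter, Finset.mem_univ, true_and, not_le] at hj
        exact le_of_lt hj
      nlinarith [hc0 j]
  have hsum := Finset.sum_le_sum (fun j (_ : j ∈ Finset.univ) => key j)
  have hL : (∑ i : Fin n, if i ∈ S then μ i - μ i * c i else -(μ i * c i))
      = ∑ j ∈ S, μ j - ∑ j, μ j * c j := by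
    rw [Finset.sum_ite, Finset.filter_mem_eq_inter, Finset.univ_inter]
    have hc : Finset.univ.filter (fun x => x ∉ S) = Sᶜ := by ext x; simp
    rw [hc, Finset.sum_sub_distrib, Finset.sum_neg_distrib]
    have := Finset.sum_add_sum_compl S (fun j => μ j * c j)
    linarith
  have hR : (∑ i : Fin n, t * (if i ∈ S then 1 - c i else -(c i))) = 0 := by
    rw [← Finset.mul_sum]
    have h1 : (∑ i : Fin n, (if i ∈ S then 1 - c i else -(c i)))
        = (S.card : ℝ) - ∑ j, c j := by
      rw [Finset.sum_ite, Finset.filter_mem_eq_inter, Finset.univ_inter]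
      have hc : Finset.univ.filter (fun x => x ∉ S) = Sᶜ := by ext x; simp
      rw [hc, Finset.sum_sub_distrib, Finset.sum_neg_distrib, Finset.sum_const,
        nsmul_eq_mul, mul_one]
      have := Finset.sum_add_sum_compl S c
      linarith
    rw [h1, hcard, hcs]
    ring
  rw [hL, hR] at hsum
  linarith

lemma aux_quadform_indicator {n k : ℕ} (G : SimpleGraph (Fin n)) [DecidableRel G.Adj]
    (P : Fin n → Fin k) (i : Fin k) :
    (fun v => if P v = i then (1:ℝ) else 0) ⬝ᵥ
        (G.adjMatrix ℝ *ᵥ (fun v => if P v = i then (1:ℝ) else 0))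
      = (pairCount G (partSet P i) (partSet P i) : ℝ) := by
  simp only [dotProduct, mulVec, SimpleGraph.adjMatrix_apply, pairCount, partSet]
  push_cast
  rw [Finset.sum_filter]
  refine Finset.sum_congr rfl fun a _ => ?_
  by_cases h : P a = i
  · simp only [h, if_pos, one_mul, if_true]
    rw [Finset.sum_filter]
    refine Finset.sum_congr rfl fun b _ => ?_
    by_cases h2 : P b = i <;> by_cases h3 : G.Adj a b <;> simp [h2, h3]
  · simp only [h, if_false, zero_mul]

lemma aux_total_sum {n : ℕ} (G : SimpleGraph (Fin n)) [DecidableRel G.Adj] :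
    ∑ a : Fin n, ∑ b : Fin n, (if G.Adj a b then (1:ℝ) else 0)
      = 2 * (G.edgeFinset.card : ℝ) := by
  have h1 : ∀ a : Fin n, ∑ b : Fin n, (if G.Adj a b then (1:ℝ) else 0) = (G.degree a : ℝ) := by
    intro a
    rw [Finset.sum_boole, SimpleGraph.degree]
    congr 1
    simp [SimpleGraph.neighborFinset_eq_filter]
  simp_rw [h1]
  rw [← Nat.cast_sum, SimpleGraph.sum_degrees_eq_twice_card_edges]
  push_cast; ring

/-- `μ_{n-k+2} + ⋯ + μ_n ≤ ∑ i, 2 e(P i)/|P i| − 2 e(G)/n`,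
where `μ` is the decreasing sequence of adjacency eigenvalues (so in 0-based
indexing the left side sums `μ j` for `n - k + 1 ≤ j ≤ n - 1`). -/
theorem stmt1 {n k : ℕ} (hk : 1 < k) (hkn : k < n)
    (G : SimpleGraph (Fin n)) [DecidableRel G.Adj]
    (hA : (G.adjMatrix ℝ).IsHermitian)
    (μ : Fin n → ℝ) (hmono : Antitone μ)
    (hperm : ∃ σ : Equiv.Perm (Fin n), μ = hA.eigenvalues ∘ σ)
    (P : Fin n → Fin k) (hsurj : Function.Surjective P) :
    ∑ j ∈ Finset.univ.filter (fun j : Fin n => n - k + 1 ≤ (j : ℕ)), μ j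
      ≤ ∑ i : Fin k, (pairCount G (partSet P i) (partSet P i) : ℝ) / (partSet P i).card
        - 2 * (G.edgeFinset.card : ℝ) / n := by
  classical
  obtain ⟨σ, hμ⟩ := hperm
  have hn : 0 < n := by omega
  have hnR : (0:ℝ) < n := by exact_mod_cast hn
  -- part sizes
  set p : Fin k → ℝ := fun i => ((partSet P i).card : ℝ) with hpdef
  have hp : ∀ i, 0 < p i := by
    intro i
    obtain ⟨v, hv⟩ := hsurj i
    have hv' : v ∈ partSet P i := by simp [partSet, hv]
    have := Finset.card_pos.mpr ⟨v, hv'⟩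
    simp only [hpdef]
    exact_mod_cast this
  -- the vectors
  set χ : Fin k → Fin n → ℝ := fun i v => if P v = i then (1:ℝ) else 0 with hχ
  set s : Fin k → ℝ := fun i => (Real.sqrt (p i))⁻¹ with hs
  set x : Fin k → Fin n → ℝ := fun i => s i • χ i with hx
  set u : Fin n → ℝ := fun _ => (Real.sqrt n)⁻¹ with hu
  have hss : ∀ i, s i * s i = (p i)⁻¹ := by
    intro i
    rw [hs, ← mul_inv, Real.mul_self_sqrt (le_of_lt (hp i))]
  have hun : (Real.sqrt n)⁻¹ * (Real.sqrt n)⁻¹ = (n : ℝ)⁻¹ := by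
    rw [← mul_inv, Real.mul_self_sqrt (le_of_lt hnR)]
  -- dot products
  have hχdot : ∀ i j, χ i ⬝ᵥ χ j = if i = j then p i else 0 := by
    intro i j
    by_cases hij : i = j
    · subst hij
      rw [if_pos rfl]
      simp only [dotProduct, hχ]
      have hv : ∀ v : Fin n, (if P v = i then (1:ℝ) else 0) * (if P v = i then 1 else 0)
          = if P v = i then 1 else 0 := by
        intro v; by_cases h : P v = i <;> simp [h]
      simp_rw [hv]
      rw [Finset.sum_boole, hpdef]
      rfl
    · rw [if_neg hij]
      simp only [dotProduct, hχ]
      rw [Finset.sum_eq_zero]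
      intro v _
      by_cases h1 : P v = i
      · by_cases h2 : P v = j
        · exact absurd (h1.symm.trans h2) hij
        · simp [h2]
      · simp [h1]
  have hxdot : ∀ i j, x i ⬝ᵥ x j = if i = j then 1 else 0 := by
    intro i j
    rw [hx]
    simp only [smul_dotProduct, dotProduct_smul, smul_eq_mul]
    rw [hχdot]
    by_cases hij : i = j
    · subst hij
      rw [if_pos rfl, if_pos rfl, ← mul_assoc, hss, inv_mul_cancel₀ (ne_of_gt (hp i))]
    · rw [if_neg hij, if_neg hij, mul_zero, mul_zero]
  have hudot : u ⬝ᵥ u = 1 := by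
    simp only [dotProduct, hu, Finset.sum_const, Finset.card_univ, Fintype.card_fin,
      nsmul_eq_mul, hun]
    field_simp
  have hχu : ∀ i, χ i ⬝ᵥ u = p i * (Real.sqrt n)⁻¹ := by
    intro i
    simp only [dotProduct, hχ, hu, ite_mul, one_mul, zero_mul]
    rw [Finset.sum_ite, Finset.sum_const_zero, add_zero, Finset.sum_const, nsmul_eq_mul]
    congr 1
  -- projection matrix
  set B : Matrix (Fin n) (Fin n) ℝ := ∑ i, vecMulVec (x i) (x i) with hB
  set Q : Matrix (Fin n) (Fin n) ℝ := B - vecMulVec u u with hQ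
  have hBu : B *ᵥ u = u := by
    funext a
    rw [hB]
    simp only [mulVec, dotProduct]
    have expand : ∀ c : Fin n, (∑ i, vecMulVec (x i) (x i)) a c * u c
        = ∑ i, x i a * (x i c * u c) := by
      intro c
      simp only [Matrix.sum_apply, vecMulVec_apply, Finset.sum_mul]
      refine Finset.sum_congr rfl fun i _ => by ring
    simp_rw [expand]
    rw [Finset.sum_comm]
    have inner : ∀ i, (∑ c, x i a * (x i c * u c)) = x i a * (x i ⬝ᵥ u) := by
      intro i
      simp only [dotProduct, Finset.mul_sum]
    simp_rw [inner]
    have hxu : ∀ i, x i ⬝ᵥ u = s i * (p i * (Real.sqrt n)⁻¹) := by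
      intro i
      rw [hx]
      simp only [smul_dotProduct, smul_eq_mul]
      rw [hχu]
    have hterm : ∀ i, x i a * (x i ⬝ᵥ u) = if P a = i then (Real.sqrt n)⁻¹ else 0 := by
      intro i
      rw [hxu, hx]
      simp only [Pi.smul_apply, smul_eq_mul, hχ]
      by_cases h : P a = i
      · rw [if_pos h, if_pos h, mul_one]
        have heq : s i * (s i * (p i * (Real.sqrt n)⁻¹))
            = (s i * s i) * p i * (Real.sqrt n)⁻¹ := by ring
        rw [heq, hss, inv_mul_cancel₀ (ne_of_gt (hp i)), one_mul]
      · rw [if_neg h, if_neg h, mul_zero, zero_mul]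
    simp_rw [hterm]
    rw [Finset.sum_ite_eq univ (P a) (fun _ => (Real.sqrt n)⁻¹)]
    simp [hu]
  have hBB : B * B = B := by
    rw [hB, Finset.sum_mul_sum]
    calc ∑ i, ∑ j, vecMulVec (x i) (x i) * vecMulVec (x j) (x j)
        = ∑ i, ∑ j, if i = j then vecMulVec (x i) (x i) else 0 := by
          refine Finset.sum_congr rfl fun i _ => Finset.sum_congr rfl fun j _ => ?_
          rw [aux_vecMulVec_mul_vecMulVec, hxdot]
          by_cases hij : i = j
          · subst hij; simp
          · simp [hij]
      _ = ∑ i : Fin k, vecMulVec (x i) (x i) := by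
          refine Finset.sum_congr rfl fun i _ => ?_
          rw [Finset.sum_ite_eq univ i (fun _ => vecMulVec (x i) (x i))]
          simp
  have hBuu : B * vecMulVec u u = vecMulVec u u := by
    rw [aux_mul_vecMulVec, hBu]
  have hBsymm : ∀ a b, B a b = B b a := by
    intro a b
    rw [hB]
    simp only [Matrix.sum_apply, vecMulVec_apply]
    exact Finset.sum_congr rfl fun i _ => by ring
  have huuB : vecMulVec u u * B = vecMulVec u u := by
    ext a b
    simp only [Matrix.mul_apply, vecMulVec_apply]
    have heq : (∑ c, u a * u c * B c b) = u a * (B *ᵥ u) b := by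
      simp only [mulVec, dotProduct, Finset.mul_sum]
      refine Finset.sum_congr rfl fun c _ => ?_
      rw [hBsymm c b]; ring
    rw [heq, hBu]
  have huuuu : vecMulVec u u * vecMulVec u u = vecMulVec u u := by
    rw [aux_vecMulVec_mul_vecMulVec, hudot, one_smul]
  have hQQ : Q * Q = Q := by
    rw [hQ, Matrix.sub_mul, Matrix.mul_sub, Matrix.mul_sub, hBB, hBuu, huuB, huuuu]
    abel
  have hQsymm : star Q = Q := by
    ext a b
    rw [Matrix.star_eq_conjTranspose, Matrix.conjTranspose_apply, star_trivial, hQ]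
    simp only [Matrix.sub_apply, vecMulVec_apply]
    rw [hBsymm b a]
  -- traces of Q
  have htraceQ : Q.trace = (k : ℝ) - 1 := by
    rw [hQ, Matrix.trace_sub, hB, Matrix.trace_sum]
    simp_rw [aux_trace_vecMulVec]
    have hone : ∀ i : Fin k, x i ⬝ᵥ x i = 1 := fun i => by rw [hxdot]; simp
    simp_rw [hone]
    rw [hudot, Finset.sum_const, Finset.card_univ, Fintype.card_fin, nsmul_eq_mul, mul_one]
  have htraceQA : (Q * G.adjMatrix ℝ).trace
      = ∑ i : Fin k, (pairCount G (partSet P i) (partSet P i) : ℝ) / p i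
        - 2 * (G.edgeFinset.card : ℝ) / n := by
    rw [hQ, Matrix.sub_mul, Matrix.trace_sub, hB, Finset.sum_mul, Matrix.trace_sum]
    have hterm : ∀ i : Fin k, (vecMulVec (x i) (x i) * G.adjMatrix ℝ).trace
        = (pairCount G (partSet P i) (partSet P i) : ℝ) / p i := by
      intro i
      rw [aux_trace_vecMulVec_mul, hx]
      simp only [smul_dotProduct, dotProduct_smul, Matrix.mulVec_smul, smul_eq_mul]
      rw [← mul_assoc, hss, hχ, aux_quadform_indicator G P i, div_eq_inv_mul]
    simp_rw [hterm]
    have huterm : (vecMulVec u u * G.adjMatrix ℝ).trace = 2 * (G.edgeFinset.card : ℝ) / n := by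
      rw [aux_trace_vecMulVec_mul]
      simp only [dotProduct, mulVec, hu, SimpleGraph.adjMatrix_apply]
      have hrow : ∀ a : Fin n, (Real.sqrt n)⁻¹ *
          (∑ b, (if G.Adj a b then (1:ℝ) else 0) * (Real.sqrt n)⁻¹)
            = (n:ℝ)⁻¹ * ∑ b, (if G.Adj a b then (1:ℝ) else 0) := by
        intro a
        rw [← Finset.sum_mul, ← hun]
        ring
      simp_rw [hrow]
      rw [← Finset.mul_sum, aux_total_sum]
      field_simp
    rw [huterm]
  -- spectral side
  set U : Matrix (Fin n) (Fin n) ℝ := (hA.eigenvectorUnitary : Matrix (Fin n) (Fin n) ℝ) with hU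
  have hUU : U * star U = 1 := (Matrix.mem_unitaryGroup_iff).mp hA.eigenvectorUnitary.2
  have hUU' : star U * U = 1 := (Matrix.mem_unitaryGroup_iff').mp hA.eigenvectorUnitary.2
  have hspec : G.adjMatrix ℝ = U * diagonal hA.eigenvalues * star U := by
    have := hA.spectral_theorem
    simpa using this
  set c : Fin n → ℝ := fun j => (star U * Q * U) j j with hc
  have hdiagsq : ∀ (M : Matrix (Fin n) (Fin n) ℝ) (j : Fin n), 0 ≤ (star M * M) j j := by
    intro M j
    rw [Matrix.mul_apply]
    refine Finset.sum_nonneg fun i _ => ?_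
    rw [Matrix.star_eq_conjTranspose, Matrix.conjTranspose_apply, star_trivial]
    exact mul_self_nonneg _
  have hc0 : ∀ j, 0 ≤ c j := by
    intro j
    have hfact : star (Q * U) * (Q * U) = star U * Q * U := by
      rw [Matrix.star_mul, hQsymm, Matrix.mul_assoc, ← Matrix.mul_assoc Q Q U, hQQ,
        ← Matrix.mul_assoc]
    rw [hc, ← hfact]
    exact hdiagsq _ j
  have hc1 : ∀ j, c j ≤ 1 := by
    intro j
    set R : Matrix (Fin n) (Fin n) ℝ := 1 - Q with hR
    have hRsymm : star R = R := by rw [hR, star_sub, star_one, hQsymm]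
    have hRR : R * R = R := by
      rw [hR, Matrix.sub_mul 1 Q (1 - Q), Matrix.one_mul, Matrix.mul_sub Q 1 Q,
        Matrix.mul_one, hQQ]
      abel
    have hfact : star (R * U) * (R * U) = star U * R * U := by
      rw [Matrix.star_mul, hRsymm, Matrix.mul_assoc, ← Matrix.mul_assoc R R U, hRR,
        ← Matrix.mul_assoc]
    have hpos := hdiagsq (R * U) j
    rw [hfact] at hpos
    have hexp : star U * R * U = 1 - star U * Q * U := by
      rw [hR, Matrix.mul_sub, Matrix.mul_one, Matrix.sub_mul, hUU']
    rw [hexp] at hpos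
    have hdiag1 : (1 - star U * Q * U) j j = 1 - (star U * Q * U) j j := by
      simp [Matrix.sub_apply, Matrix.one_apply_eq]
    rw [hdiag1] at hpos
    rw [hc]
    linarith
  have hcsum : ∑ j, c j = (k : ℝ) - 1 := by
    have h0 : ∑ j, c j = (star U * Q * U).trace := by
      simp [Matrix.trace, Matrix.diag, hc]
    rw [h0, Matrix.trace_mul_cycle, hUU, Matrix.one_mul, htraceQ]
  have htrQA2 : (Q * G.adjMatrix ℝ).trace = ∑ j, c j * hA.eigenvalues j := by
    have hfold := congrArg (fun M => Q * M) hspec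
    rw [hfold, ← Matrix.mul_assoc, ← Matrix.mul_assoc, Matrix.trace_mul_cycle,
      ← Matrix.mul_assoc, aux_trace_mul_diagonal]
  have hperm2 : ∑ j, μ j * c (σ j) = ∑ j, c j * hA.eigenvalues j := by
    calc ∑ j, μ j * c (σ j) = ∑ j, (fun j => c j * hA.eigenvalues j) (σ j) := by
          refine Finset.sum_congr rfl fun j _ => ?_
          rw [hμ]; simp only [Function.comp_apply]; ring
      _ = ∑ j, c j * hA.eigenvalues j := Equiv.sum_comp σ (fun j => c j * hA.eigenvalues j)
  -- apply the threshold inequality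
  have hcs' : ∑ j, c (σ j) = ((k - 1 : ℕ) : ℝ) := by
    rw [Equiv.sum_comp σ c, hcsum, Nat.cast_sub (by omega : 1 ≤ k), Nat.cast_one]
  have hkey := aux_threshold n (k - 1) (by omega) (by omega) μ (fun j => c (σ j)) hmono
    (fun j => hc0 _) (fun j => hc1 _) hcs'
  have hidx : n - (k - 1) = n - k + 1 := by omega
  rw [hidx] at hkey
  calc ∑ j ∈ Finset.univ.filter (fun j : Fin n => n - k + 1 ≤ (j : ℕ)), μ j
      ≤ ∑ j, μ j * c (σ j) := hkey
    _ = ∑ j, c j * hA.eigenvalues j := hperm2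
    _ = (Q * G.adjMatrix ℝ).trace := htrQA2.symm
    _ = ∑ i : Fin k, (pairCount G (partSet P i) (partSet P i) : ℝ) / p i
        - 2 * (G.edgeFinset.card : ℝ) / n := htraceQA
end

section
/- For any graph G on n vertices with Laplacian eigenvalues 0 = λ₁ ≤ ... ≤ λ_n and any partition [n] = P₁ ∪ ... ∪ P_k into nonempty sets, λ₂ + ... + λ_k ≤ Σ_{1≤i<j≤k} e(Pᵢ,Pⱼ)(1/|Pᵢ| + 1/|Pⱼ|), where e(Pᵢ,Pⱼ) is the number of edges between Pᵢ and Pⱼ. -/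
open Finset Matrix


lemma diagIdem {n : ℕ} (M : Matrix (Fin n) (Fin n) ℝ)
    (hsymm : ∀ i j, M i j = M j i) (hidem : M * M = M) (j : Fin n) :
    0 ≤ M j j ∧ M j j ≤ 1 := by
  have h : M j j = ∑ m, (M j m)^2 := by
    conv_lhs => rw [← hidem]
    simp only [Matrix.mul_apply]
    exact Finset.sum_congr rfl fun m _ => by rw [sq, hsymm m j]
  have h0 : 0 ≤ M j j := h ▸ Finset.sum_nonneg fun m _ => sq_nonneg _
  have h1 : (M j j)^2 ≤ M j j := by
    nth_rewrite 2 [h]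
    have := Finset.single_le_sum (f := fun m => (M j m)^2)
      (fun m _ => sq_nonneg _) (Finset.mem_univ j)
    simpa using this
  exact ⟨h0, by nlinarith⟩


noncomputable def projQ {n k : ℕ} (P : Fin n → Fin k) : Matrix (Fin n) (Fin n) ℝ :=
  Matrix.of fun u v => if P u = P v then (((partSet P (P u)).card : ℝ))⁻¹ else 0

lemma card_partSet_apply {n k : ℕ} (P : Fin n → Fin k) {v : Fin n} {i : Fin k}
    (h : P v = i) : (partSet P i).card = (partSet P (P v)).card := by rw [h]

lemma projQ_symm {n k : ℕ} (P : Fin n → Fin k) (u v : Fin n) :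
    projQ P u v = projQ P v u := by
  unfold projQ
  by_cases h : P u = P v <;> simp [h, eq_comm]

lemma projQ_idem {n k : ℕ} (P : Fin n → Fin k) (hsurj : Function.Surjective P) :
    projQ P * projQ P = projQ P := by
  ext u w
  simp only [Matrix.mul_apply, projQ, Matrix.of_apply]
  have key : ∀ v : Fin n,
      (if P u = P v then (((partSet P (P u)).card : ℝ))⁻¹ else 0) *
      (if P v = P w then (((partSet P (P v)).card : ℝ))⁻¹ else 0)
      = if P v = P u then (if P u = P w then
          (((partSet P (P u)).card : ℝ))⁻¹ * (((partSet P (P u)).card : ℝ))⁻¹ else 0) else 0 := by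
    intro v
    by_cases hv : P v = P u
    · by_cases hw : P u = P w <;> simp [hv, hw, hv ▸ hw, eq_comm]
    · have : ¬ P u = P v := fun h => hv h.symm
      simp [this, hv]
  rw [Finset.sum_congr rfl fun v _ => key v]
  rw [← Finset.sum_filter]
  have hc : (Finset.univ.filter (fun v => P v = P u)) = partSet P (P u) := rfl
  rw [hc, Finset.sum_const, nsmul_eq_mul]
  have hpos : (0:ℝ) < (partSet P (P u)).card := by
    have : u ∈ partSet P (P u) := by simp [partSet]
    exact_mod_cast Finset.card_pos.mpr ⟨u, this⟩
  by_cases hw : P u = P w <;> simp [hw]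
  field_simp

lemma projQ_trace {n k : ℕ} (P : Fin n → Fin k) (hsurj : Function.Surjective P) :
    (projQ P).trace = k := by
  rw [Matrix.trace]
  have : ∀ u : Fin n, (projQ P).diag u = (((partSet P (P u)).card : ℝ))⁻¹ := by
    intro u; simp [projQ, Matrix.diag]
  rw [Finset.sum_congr rfl fun u _ => this u]
  rw [← Finset.sum_fiberwise Finset.univ P (fun u => (((partSet P (P u)).card : ℝ))⁻¹)]
  have : ∀ i : Fin k, ∑ u ∈ Finset.univ.filter (fun u => P u = i),
      (((partSet P (P u)).card : ℝ))⁻¹ = 1 := by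
    intro i
    have h1 : ∀ u ∈ Finset.univ.filter (fun u => P u = i),
        (((partSet P (P u)).card : ℝ))⁻¹ = (((partSet P i).card : ℝ))⁻¹ := by
      intro u hu; simp only [Finset.mem_filter] at hu; rw [hu.2]
    rw [Finset.sum_congr rfl h1, Finset.sum_const, nsmul_eq_mul]
    have hc : (Finset.univ.filter (fun u => P u = i)) = partSet P i := rfl
    rw [hc]
    have hpos : (0:ℝ) < (partSet P i).card := by
      obtain ⟨v, hv⟩ := hsurj i
      exact_mod_cast Finset.card_pos.mpr ⟨v, by simp [partSet, hv]⟩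
    field_simp
  rw [Finset.sum_congr rfl fun i _ => this i]
  simp


lemma pairCount_symm {n : ℕ} (G : SimpleGraph (Fin n)) [DecidableRel G.Adj]
    (X Y : Finset (Fin n)) : pairCount G X Y = pairCount G Y X := by
  unfold pairCount
  rw [Finset.sum_comm]
  exact Finset.sum_congr rfl fun v _ => Finset.sum_congr rfl fun u _ => by
    simp [G.adj_comm u v]

lemma trace_LQ {n k : ℕ} (G : SimpleGraph (Fin n)) [DecidableRel G.Adj]
    (P : Fin n → Fin k) (hsurj : Function.Surjective P) :
    (G.lapMatrix ℝ * projQ P).trace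
      = ∑ i : Fin k, ∑ j : Fin k, (if i ≠ j then
          (pairCount G (partSet P i) (partSet P j) : ℝ) * (((partSet P i).card : ℝ))⁻¹ else 0) := by
  have step1 : (G.lapMatrix ℝ * projQ P).trace
      = ∑ u, ∑ v, (if G.Adj u v ∧ P u ≠ P v then (((partSet P (P u)).card : ℝ))⁻¹ else 0) := by
    rw [Matrix.trace]
    have hdiag : ∀ u : Fin n, (G.lapMatrix ℝ * projQ P).diag u
        = ∑ v, (if G.Adj u v ∧ P u ≠ P v then (((partSet P (P u)).card : ℝ))⁻¹ else 0) := by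
      intro u
      simp only [Matrix.diag, Matrix.mul_apply, SimpleGraph.lapMatrix,
        Matrix.sub_apply, SimpleGraph.degMatrix, Matrix.diagonal_apply,
        SimpleGraph.adjMatrix_apply, projQ, Matrix.of_apply]
      rw [Finset.sum_congr rfl (fun v _ => sub_mul _ _ _), Finset.sum_sub_distrib]
      have e1 : ∑ v, (if u = v then (G.degree u : ℝ) else 0) *
          (if P v = P u then (((partSet P (P v)).card : ℝ))⁻¹ else 0)
          = (G.degree u : ℝ) * (((partSet P (P u)).card : ℝ))⁻¹ := by
        rw [Finset.sum_eq_single u]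
        · simp
        · intro v _ hv; simp [Ne.symm hv]
        · simp
      have e2 : ∀ v, (if G.Adj u v then (1:ℝ) else 0) *
          (if P v = P u then (((partSet P (P v)).card : ℝ))⁻¹ else 0)
          = if G.Adj u v ∧ P v = P u then (((partSet P (P u)).card : ℝ))⁻¹ else 0 := by
        intro v
        by_cases ha : G.Adj u v <;> by_cases hp : P v = P u <;>
          simp [ha, hp] <;> rw [hp]
      have e3 : (G.degree u : ℝ) * (((partSet P (P u)).card : ℝ))⁻¹
          = ∑ v, (if G.Adj u v then (((partSet P (P u)).card : ℝ))⁻¹ else 0) := by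
        rw [← Finset.sum_filter, Finset.sum_const, nsmul_eq_mul]
        congr 1
        rw [← SimpleGraph.neighborFinset_eq_filter, SimpleGraph.degree]
      rw [e1, Finset.sum_congr rfl fun v _ => e2 v, e3, ← Finset.sum_sub_distrib]
      apply Finset.sum_congr rfl
      intro v _
      by_cases ha : G.Adj u v <;> by_cases hp : P u = P v
      · simp [ha, hp]
      · rw [if_neg (fun h : G.Adj u v ∧ P v = P u => hp h.2.symm)]
        simp [ha, hp]
      · simp [ha]
      · simp [ha]
    exact Finset.sum_congr rfl fun u _ => hdiag u
  rw [step1]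
  -- fiberwise over u then v
  rw [← Finset.sum_fiberwise Finset.univ P
    (fun u => ∑ v, (if G.Adj u v ∧ P u ≠ P v then (((partSet P (P u)).card : ℝ))⁻¹ else 0))]
  apply Finset.sum_congr rfl
  intro i _
  have hinner : ∀ u ∈ Finset.univ.filter (fun u => P u = i),
      (∑ v, (if G.Adj u v ∧ P u ≠ P v then (((partSet P (P u)).card : ℝ))⁻¹ else 0))
      = ∑ j : Fin k, ∑ v ∈ Finset.univ.filter (fun v => P v = j),
          (if G.Adj u v ∧ i ≠ j then (((partSet P i).card : ℝ))⁻¹ else 0) := by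
    intro u hu
    simp only [Finset.mem_filter] at hu
    rw [← Finset.sum_fiberwise Finset.univ P
      (fun v => (if G.Adj u v ∧ P u ≠ P v then (((partSet P (P u)).card : ℝ))⁻¹ else 0))]
    apply Finset.sum_congr rfl
    intro j _
    apply Finset.sum_congr rfl
    intro v hv
    simp only [Finset.mem_filter] at hv
    rw [hu.2, hv.2]
  rw [Finset.sum_congr rfl hinner, Finset.sum_comm]
  apply Finset.sum_congr rfl
  intro j _
  by_cases hij : i ≠ j
  · rw [if_pos hij]
    have : ∀ u ∈ Finset.univ.filter (fun u => P u = i),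
        (∑ v ∈ Finset.univ.filter (fun v => P v = j),
          (if G.Adj u v ∧ i ≠ j then (((partSet P i).card : ℝ))⁻¹ else 0))
        = (∑ v ∈ partSet P j, (if G.Adj u v then (1:ℝ) else 0)) * (((partSet P i).card : ℝ))⁻¹ := by
      intro u _
      rw [Finset.sum_mul]
      apply Finset.sum_congr rfl
      intro v _
      by_cases ha : G.Adj u v <;> simp [ha, hij]
    rw [Finset.sum_congr rfl this, ← Finset.sum_mul]
    congr 1
    unfold pairCount
    push_cast
    rfl
  · rw [if_neg hij]
    push_neg at hij
    apply Finset.sum_eq_zero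
    intro u _
    apply Finset.sum_eq_zero
    intro v _
    simp [hij]

lemma pair_sym_sum {k : ℕ} (f : Fin k → Fin k → ℝ) (hdiag : ∀ i, f i i = 0) :
    ∑ i : Fin k, ∑ j : Fin k, f i j
      = ∑ p ∈ Finset.univ.filter (fun p : Fin k × Fin k => p.1 < p.2), (f p.1 p.2 + f p.2 p.1) := by
  rw [← Finset.sum_product']
  have huniv : (Finset.univ : Finset (Fin k × Fin k)) = Finset.univ ×ˢ Finset.univ := by
    simp [Finset.univ_product_univ]
  rw [← huniv]
  rw [← Finset.sum_filter_add_sum_filter_not Finset.univ (fun p : Fin k × Fin k => p.1 < p.2)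
    (fun p => f p.1 p.2)]
  rw [Finset.sum_add_distrib]
  congr 1
  -- ∑ over ¬ p.1 < p.2 of f p.1 p.2 = ∑ over p.1 < p.2 of f p.2 p.1
  have hsub : Finset.univ.filter (fun p : Fin k × Fin k => p.2 < p.1)
      ⊆ Finset.univ.filter (fun p : Fin k × Fin k => ¬ p.1 < p.2) := by
    intro p hp
    simp only [Finset.mem_filter] at *
    exact ⟨hp.1, not_lt_of_gt hp.2⟩
  rw [← Finset.sum_subset hsub (fun p hp hnp => by
    simp only [Finset.mem_filter, not_lt] at hp hnp
    have : p.1 = p.2 := le_antisymm (by simpa using hnp) hp.2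
    rw [this, hdiag])]
  apply Finset.sum_nbij' (i := Prod.swap) (j := Prod.swap)
  · intro p hp; simp only [Finset.mem_filter] at *; exact ⟨Finset.mem_univ _, hp.2⟩
  · intro p hp; simp only [Finset.mem_filter] at *; exact ⟨Finset.mem_univ _, hp.2⟩
  · intro p _; simp
  · intro p _; simp
  · intro p _; simp

lemma keyIneq {n k : ℕ} (hkn : k < n) (hk0 : 0 < k) (lam q : Fin n → ℝ)
    (hmono : Monotone lam) (hq0 : ∀ j, 0 ≤ q j) (hq1 : ∀ j, q j ≤ 1)
    (hsum : ∑ j, q j = k) :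
    ∑ j ∈ univ.filter (fun j : Fin n => (j : ℕ) < k), lam j ≤ ∑ j, lam j * q j := by
  have hn : 0 < n := lt_trans hk0 hkn
  set t : ℝ := lam ⟨k - 1, by omega⟩ with ht
  have hcard : (univ.filter (fun j : Fin n => (j : ℕ) < k)).card = k := by
    have : univ.filter (fun j : Fin n => (j : ℕ) < k) = Finset.Iio (⟨k, hkn⟩ : Fin n) := by
      ext j; simp [Fin.lt_def]
    rw [this, Fin.card_Iio]
  have key : ∑ j ∈ univ.filter (fun j : Fin n => (j : ℕ) < k), (lam j - t)
      ≤ ∑ j, (lam j - t) * q j := by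
    rw [← Finset.sum_filter_add_sum_filter_not univ (fun j : Fin n => (j : ℕ) < k)
      (fun j => (lam j - t) * q j)]
    have h1 : ∑ j ∈ univ.filter (fun j : Fin n => (j : ℕ) < k), (lam j - t)
        ≤ ∑ j ∈ univ.filter (fun j : Fin n => (j : ℕ) < k), (lam j - t) * q j := by
      apply Finset.sum_le_sum
      intro j hj
      simp only [mem_filter] at hj
      have hjt : lam j ≤ t := hmono (by simp [Fin.le_def]; omega)
      nlinarith [hq1 j, hq0 j]
    have h2 : (0:ℝ) ≤ ∑ j ∈ univ.filter (fun j : Fin n => ¬ (j : ℕ) < k), (lam j - t) * q j := by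
      apply Finset.sum_nonneg
      intro j hj
      simp only [mem_filter] at hj
      have hjt : t ≤ lam j := hmono (by simp [Fin.le_def]; omega)
      nlinarith [hq0 j]
    linarith
  have e1 : ∑ j, (lam j - t) * q j = ∑ j, lam j * q j - t * k := by
    simp only [sub_mul]
    rw [Finset.sum_sub_distrib, ← Finset.mul_sum, hsum]
  have e2 : ∑ j ∈ univ.filter (fun j : Fin n => (j : ℕ) < k), (lam j - t)
      = (∑ j ∈ univ.filter (fun j : Fin n => (j : ℕ) < k), lam j) - t * k := by
    rw [Finset.sum_sub_distrib, Finset.sum_const, hcard]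
    ring_nf
  linarith [key, e1.symm ▸ key]

/-- for the increasing sequence `lam` of Laplacian eigenvalues
`0 = λ₁ ≤ ⋯ ≤ λ_n`, we have
`λ₂ + ⋯ + λ_k ≤ ∑_{i<j} e(P i, P j) (1/|P i| + 1/|P j|)` (0-based indices `1 ≤ j < k`). -/
theorem stmt2 {n k : ℕ} (hk : 1 < k) (hkn : k < n)
    (G : SimpleGraph (Fin n)) [DecidableRel G.Adj]
    (hL : (G.lapMatrix ℝ).IsHermitian)
    (lam : Fin n → ℝ) (hmono : Monotone lam)
    (hperm : ∃ σ : Equiv.Perm (Fin n), lam = hL.eigenvalues ∘ σ)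
    (P : Fin n → Fin k) (hsurj : Function.Surjective P) :
    ∑ j ∈ Finset.univ.filter (fun j : Fin n => 1 ≤ (j : ℕ) ∧ (j : ℕ) < k), lam j
      ≤ ∑ p ∈ Finset.univ.filter (fun p : Fin k × Fin k => p.1 < p.2),
          (pairCount G (partSet P p.1) (partSet P p.2) : ℝ) *
            (1 / (partSet P p.1).card + 1 / (partSet P p.2).card) := by
  obtain ⟨σ, hσ⟩ := hperm
  set U : Matrix (Fin n) (Fin n) ℝ := (hL.eigenvectorUnitary : Matrix (Fin n) (Fin n) ℝ) with hUdef
  have hU1 : U * star U = 1 := Matrix.mem_unitaryGroup_iff.mp hL.eigenvectorUnitary.2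
  have hU2 : star U * U = 1 := Matrix.mem_unitaryGroup_iff'.mp hL.eigenvectorUnitary.2
  set M : Matrix (Fin n) (Fin n) ℝ := star U * projQ P * U with hMdef
  have hQstar : star (projQ P) = projQ P := by
    ext a b
    simp only [Matrix.star_apply, star_trivial]
    exact projQ_symm P b a
  have hMidem : M * M = M := by
    have h1 : U * (star U * (projQ P * U)) = projQ P * U := by
      rw [← mul_assoc, hU1, one_mul]
    rw [hMdef]
    simp only [mul_assoc]
    rw [h1, ← mul_assoc (projQ P) (projQ P) U, projQ_idem P hsurj]
  have hMstar : star M = M := by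
    rw [hMdef, StarMul.star_mul, StarMul.star_mul, star_star, hQstar, mul_assoc]
  have hMsymm : ∀ a b, M a b = M b a := by
    intro a b
    conv_lhs => rw [← hMstar]
    simp [Matrix.star_apply]
  have hbounds := fun j => diagIdem M hMsymm hMidem j
  have htrM : ∑ j, M j j = k := by
    have : M.trace = (projQ P).trace := by
      rw [hMdef, Matrix.trace_mul_comm, ← mul_assoc, hU1, one_mul]
    rw [Matrix.trace] at this
    simpa [Matrix.diag] using this.trans (projQ_trace P hsurj)
  have hspec : G.lapMatrix ℝ = U * Matrix.diagonal hL.eigenvalues * star U := by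
    have h := hL.spectral_theorem
    rwa [RCLike.ofReal_real_eq_id, Function.id_comp] at h
  have hsumeig : ∑ j, hL.eigenvalues j * M j j = (G.lapMatrix ℝ * projQ P).trace := by
    have e1 : ∑ j, hL.eigenvalues j * M j j
        = (Matrix.diagonal hL.eigenvalues * M).trace := by
      rw [Matrix.trace]
      exact (Finset.sum_congr rfl fun j _ => by
        simp [Matrix.diag, Matrix.diagonal_mul]).symm
    rw [e1, hMdef,
      show Matrix.diagonal hL.eigenvalues * (star U * projQ P * U)
        = (Matrix.diagonal hL.eigenvalues * (star U * projQ P)) * U by simp only [mul_assoc],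
      Matrix.trace_mul_comm,
      show U * (Matrix.diagonal hL.eigenvalues * (star U * projQ P))
        = (U * Matrix.diagonal hL.eigenvalues * star U) * projQ P by simp only [mul_assoc],
      ← hspec]
  -- apply keyIneq with q' := diag of M reindexed by σ
  set q' : Fin n → ℝ := fun j => M (σ j) (σ j) with hq'def
  have hq0 : ∀ j, 0 ≤ q' j := fun j => (hbounds (σ j)).1
  have hq1 : ∀ j, q' j ≤ 1 := fun j => (hbounds (σ j)).2
  have hqsum : ∑ j, q' j = k := by
    rw [hq'def]
    rw [Equiv.sum_comp σ (fun j => M j j)]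
    exact htrM
  have hkey := keyIneq hkn (by omega) lam q' hmono hq0 hq1 hqsum
  have hlamq : ∑ j, lam j * q' j = (G.lapMatrix ℝ * projQ P).trace := by
    rw [hσ]
    have h := Equiv.sum_comp σ (fun j => hL.eigenvalues j * M j j)
    calc ∑ j, (hL.eigenvalues ∘ σ) j * q' j
        = ∑ j, hL.eigenvalues j * M j j := h
      _ = _ := hsumeig
  -- LHS monotonicity
  have hlamnonneg : ∀ j, 0 ≤ lam j := by
    intro j
    rw [hσ]
    exact (SimpleGraph.posSemidef_lapMatrix ℝ G).eigenvalues_nonneg (σ j)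
  have hLHS : ∑ j ∈ Finset.univ.filter (fun j : Fin n => 1 ≤ (j : ℕ) ∧ (j : ℕ) < k), lam j
      ≤ ∑ j ∈ Finset.univ.filter (fun j : Fin n => (j : ℕ) < k), lam j := by
    apply Finset.sum_le_sum_of_subset_of_nonneg
    · intro j hj; simp only [Finset.mem_filter] at *; exact ⟨hj.1, hj.2.2⟩
    · intro j _ _; exact hlamnonneg j
  -- RHS computation
  have hRHS : (G.lapMatrix ℝ * projQ P).trace
      = ∑ p ∈ Finset.univ.filter (fun p : Fin k × Fin k => p.1 < p.2),
          (pairCount G (partSet P p.1) (partSet P p.2) : ℝ) *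
            (1 / (partSet P p.1).card + 1 / (partSet P p.2).card) := by
    rw [trace_LQ G P hsurj]
    rw [pair_sym_sum (fun i j => if i ≠ j then
        (pairCount G (partSet P i) (partSet P j) : ℝ) * (((partSet P i).card : ℝ))⁻¹ else 0)
      (fun i => by simp)]
    apply Finset.sum_congr rfl
    intro p hp
    simp only [Finset.mem_filter] at hp
    have hne : p.1 ≠ p.2 := ne_of_lt hp.2
    rw [if_pos hne, if_pos (Ne.symm hne)]
    rw [pairCount_symm G (partSet P p.2) (partSet P p.1)]
    rw [one_div, one_div]
    ring
  linarith [hLHS, hkey, hlamq, hRHS ▸ (hlamq ▸ hkey)]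
end

section
/- If equality holds in λ₂(G) + ... + λ_k(G) ≤ Σ_{1≤i<j≤k} e(Pᵢ,Pⱼ)(1/|Pᵢ| + 1/|Pⱼ|) for a partition [n] = P₁ ∪ ... ∪ P_k, then the partition is semiequitable for G, i.e., each bipartite graph G[Pᵢ,Pⱼ] (i < j) is semiregular. -/
def degIn {n : ℕ} (G : SimpleGraph (Fin n)) [DecidableRel G.Adj]
    (X : Finset (Fin n)) (v : Fin n) : ℕ :=
  (X.filter (fun u => G.Adj v u)).card

open Matrix Finset

lemma Finset.sum_sub_sum_div_card_sq {α : Type*} (s : Finset α) (f : α → ℝ) :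
    ∑ x ∈ s, (f x - (∑ y ∈ s, f y) / #s) ^ 2 = ∑ x ∈ s, f x ^ 2 - (∑ x ∈ s, f x) ^ 2 / #s := by
  rcases s.eq_empty_or_nonempty with rfl | hs
  · simp
  have hcard : (#s : ℝ) ≠ 0 := by positivity
  simp only [sub_sq, sum_add_distrib, sum_sub_distrib, sum_const, nsmul_eq_mul, ← sum_mul,
    mul_assoc, ← mul_sum]
  field_simp
  ring

section Partition

variable {V κ : Type*} [Fintype V] [DecidableEq κ] (P : V → κ)

def partIndicator (i : κ) : V → ℝ := fun v => if P v = i then 1 else 0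

lemma dotProduct_partIndicator (b : V → ℝ) (i : κ) :
    b ⬝ᵥ partIndicator P i = ∑ v with P v = i, b v := by
  simp [dotProduct, partIndicator, sum_filter]

lemma partIndicator_dotProduct_self (i : κ) :
    partIndicator P i ⬝ᵥ partIndicator P i = #{v | P v = i} := by
  rw [dotProduct_partIndicator]
  simp [partIndicator, filter_filter]

variable [Fintype κ]

/-- The squared norm of the orthogonal projection of `b` onto the vectors constant on parts. -/
noncomputable def partMass (b : V → ℝ) : ℝ :=
  ∑ i, (b ⬝ᵥ partIndicator P i) ^ 2 / #{v | P v = i}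

lemma sum_sq_sub_partMean (b : V → ℝ) :
    ∑ v, (b v - (b ⬝ᵥ partIndicator P (P v)) / #{w | P w = P v}) ^ 2 = b ⬝ᵥ b - partMass P b := by
  rw [partMass, ← sum_fiberwise univ P, dotProduct, ← sum_fiberwise univ P, ← sum_sub_distrib]
  refine sum_congr rfl fun i _ => ?_
  rw [dotProduct_partIndicator]
  simp_rw [← sq]
  rw [← sum_sub_sum_div_card_sq]
  refine sum_congr rfl fun v hv => ?_
  rw [(mem_filter.1 hv).2, dotProduct_partIndicator]

lemma partMass_nonneg (b : V → ℝ) : 0 ≤ partMass P b :=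
  sum_nonneg fun _ _ => by positivity

lemma partMass_le_dotProduct_self (b : V → ℝ) : partMass P b ≤ b ⬝ᵥ b :=
  sub_nonneg.1 <| sum_sq_sub_partMean P b ▸ sum_nonneg fun _ _ => sq_nonneg _

lemma apply_eq_apply_of_partMass_eq {b : V → ℝ} (h : partMass P b = b ⬝ᵥ b) {u v : V}
    (huv : P u = P v) : b u = b v := by
  have hsum := sum_sq_sub_partMean P b
  rw [h, sub_self, sum_eq_zero_iff_of_nonneg fun _ _ => sq_nonneg _] at hsum
  have hmean (w : V) : b w = (b ⬝ᵥ partIndicator P (P w)) / #{x | P x = P w} :=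
    sub_eq_zero.1 <| pow_eq_zero_iff two_ne_zero |>.1 <| hsum w (mem_univ w)
  rw [hmean u, hmean v, huv]

lemma dotProduct_partIndicator_eq_zero_of_partMass_eq_zero {b : V → ℝ} (h : partMass P b = 0)
    (i : κ) : b ⬝ᵥ partIndicator P i = 0 := by
  rw [partMass, sum_eq_zero_iff_of_nonneg fun _ _ => by positivity] at h
  rcases div_eq_zero_iff.1 (h i (mem_univ i)) with hb | hcard
  · exact pow_eq_zero_iff two_ne_zero |>.1 hb
  · have hempty : ({v | P v = i} : Finset V) = ∅ := card_eq_zero.1 (by exact_mod_cast hcard)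
    rw [dotProduct_partIndicator, hempty, sum_empty]

end Partition

namespace Matrix.IsHermitian

variable {ι : Type*} [Fintype ι] [DecidableEq ι] {A : Matrix ι ι ℝ} (hA : A.IsHermitian)

lemma eigenvectorBasis_dotProduct_self (m : ι) :
    ⇑(hA.eigenvectorBasis m) ⬝ᵥ ⇑(hA.eigenvectorBasis m) = 1 := by
  have h := real_inner_self_eq_norm_sq (hA.eigenvectorBasis m)
  rwa [hA.eigenvectorBasis.orthonormal.1 m, one_pow, EuclideanSpace.inner_eq_star_dotProduct,
    star_trivial] at h

lemma sum_dotProduct_smul_eigenvectorBasis (y : ι → ℝ) :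
    ∑ m, (⇑(hA.eigenvectorBasis m) ⬝ᵥ y) • ⇑(hA.eigenvectorBasis m) = y := by
  simpa [EuclideanSpace.inner_eq_star_dotProduct, dotProduct_comm] using
    congrArg WithLp.ofLp (hA.eigenvectorBasis.sum_repr' (WithLp.toLp 2 y))

lemma sum_sq_eigenvectorBasis_dotProduct (y : ι → ℝ) :
    ∑ m, (⇑(hA.eigenvectorBasis m) ⬝ᵥ y) ^ 2 = y ⬝ᵥ y := by
  nth_rw 2 [← hA.sum_dotProduct_smul_eigenvectorBasis y]
  simp [sum_dotProduct, smul_dotProduct, sq]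

lemma mulVec_eq_sum_eigenvalues (y : ι → ℝ) :
    A *ᵥ y = ∑ m, (hA.eigenvalues m * (⇑(hA.eigenvectorBasis m) ⬝ᵥ y)) •
      ⇑(hA.eigenvectorBasis m) := by
  conv_lhs => rw [← hA.sum_dotProduct_smul_eigenvectorBasis y]
  simp [mulVec_sum, mulVec_smul, hA.mulVec_eigenvectorBasis, smul_smul, mul_comm]

lemma dotProduct_mulVec_eq_sum_eigenvalues (y : ι → ℝ) :
    y ⬝ᵥ (A *ᵥ y) = ∑ m, hA.eigenvalues m * (⇑(hA.eigenvectorBasis m) ⬝ᵥ y) ^ 2 := by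
  rw [hA.mulVec_eq_sum_eigenvalues, dotProduct_sum]
  simp [sq, dotProduct_comm y, mul_assoc]

lemma mulVec_sub_smul_apply_eq {y : ι → ℝ} {θ : ℝ} {u v : ι}
    (h : ∀ m, hA.eigenvalues m ≠ θ → ⇑(hA.eigenvectorBasis m) ⬝ᵥ y ≠ 0 →
      hA.eigenvectorBasis m u = hA.eigenvectorBasis m v) :
    (A *ᵥ y) u - θ * y u = (A *ᵥ y) v - θ * y v := by
  have key : A *ᵥ y - θ • y = ∑ m, ((hA.eigenvalues m - θ) * (⇑(hA.eigenvectorBasis m) ⬝ᵥ y)) •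
      ⇑(hA.eigenvectorBasis m) := by
    nth_rw 2 [← hA.sum_dotProduct_smul_eigenvectorBasis y]
    rw [hA.mulVec_eq_sum_eigenvalues, smul_sum, ← sum_sub_distrib]
    simp only [smul_smul, ← sub_smul, sub_mul]
  have expand (w : ι) : (A *ᵥ y) w - θ * y w = ∑ m, (hA.eigenvalues m - θ) *
      (⇑(hA.eigenvectorBasis m) ⬝ᵥ y) * hA.eigenvectorBasis m w := by
    simpa using congrFun key w
  rw [expand u, expand v]
  refine sum_congr rfl fun m _ => ?_
  by_cases hm : hA.eigenvalues m = θ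
  · simp [hm]
  by_cases hy : ⇑(hA.eigenvectorBasis m) ⬝ᵥ y = 0
  · simp [hy]
  rw [h m hm hy]

variable {κ : Type*} [Fintype κ] [DecidableEq κ] (P : ι → κ)

lemma sum_partMass_eigenvectorBasis (hP : Function.Surjective P) :
    ∑ m, partMass P (hA.eigenvectorBasis m) = Fintype.card κ := by
  simp only [partMass]
  rw [sum_comm]
  simp only [← sum_div, hA.sum_sq_eigenvectorBasis_dotProduct, partIndicator_dotProduct_self]
  rw [← nsmul_one, ← card_univ, ← sum_const]
  refine sum_congr rfl fun i _ => div_self ?_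
  obtain ⟨v, hv⟩ := hP i
  exact Nat.cast_ne_zero.2 (card_ne_zero.2 ⟨v, by simp [hv]⟩)

lemma sum_eigenvalues_mul_partMass :
    ∑ m, hA.eigenvalues m * partMass P (hA.eigenvectorBasis m)
      = ∑ i, partIndicator P i ⬝ᵥ (A *ᵥ partIndicator P i) / #{v | P v = i} := by
  simp only [partMass, mul_sum, hA.dotProduct_mulVec_eq_sum_eigenvalues, sum_div]
  rw [sum_comm]
  simp [mul_div_assoc, dotProduct_comm]

end Matrix.IsHermitian

/-- With `θ = λₖ₋₁`, the terms of `∑ (λₜ - θ) (cₜ - [t < k])` are nonnegative and add up to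
`∑ λₜ cₜ - ∑_{t < k} λₜ ≤ 0`, so all of them vanish. -/
lemma weight_eq_of_sum_mul_le_sum_lt {n k : ℕ} (hk : 0 < k) (hkn : k ≤ n) {lam c : Fin n → ℝ}
    (hlam : Monotone lam) (hc₀ : ∀ t, 0 ≤ c t) (hc₁ : ∀ t, c t ≤ 1) (hc : ∑ t, c t = k)
    (hlc : ∑ t, lam t * c t ≤ ∑ t ∈ univ.filter fun t : Fin n => (t : ℕ) < k, lam t)
    (t : Fin n) :
    (lam t < lam ⟨k - 1, by omega⟩ → c t = 1) ∧ (lam ⟨k - 1, by omega⟩ < lam t → c t = 0) := by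
  set θ := lam ⟨k - 1, by omega⟩
  have hbelow (t : Fin n) (ht : (t : ℕ) < k) : lam t ≤ θ := hlam (Fin.mk_le_mk.2 (by omega))
  have habove (t : Fin n) (ht : ¬ (t : ℕ) < k) : θ ≤ lam t := hlam (Fin.mk_le_mk.2 (by omega))
  have hterm (t : Fin n) : 0 ≤ (lam t - θ) * (c t - if (t : ℕ) < k then 1 else 0) := by
    by_cases ht : (t : ℕ) < k
    · simp only [ht, if_true]; nlinarith [hbelow t ht, hc₁ t]
    · simp only [ht, if_false]; nlinarith [habove t ht, hc₀ t]
  have htotal : ∑ t, (lam t - θ) * (c t - if (t : ℕ) < k then 1 else 0) ≤ 0 := by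
    simp only [sub_mul, mul_sub, sum_sub_distrib, ← mul_sum, hc, mul_ite, mul_one, mul_zero,
      ← sum_filter, sum_const, nsmul_eq_mul, Fin.card_filter_val_lt, min_eq_right hkn]
    linarith
  have hzero := (sum_eq_zero_iff_of_nonneg fun t _ => hterm t).1
    (le_antisymm htotal (sum_nonneg fun t _ => hterm t)) t (mem_univ t)
  constructor
  · intro hlt
    have ht : (t : ℕ) < k := by_contra fun ht => (habove t ht).not_gt hlt
    simp only [ht, if_true] at hzero
    rcases mul_eq_zero.1 hzero with h | h <;> linarith
  · intro hgt
    have ht : ¬ (t : ℕ) < k := fun ht => (hbelow t ht).not_gt hgt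
    simp only [ht, if_false] at hzero
    rcases mul_eq_zero.1 hzero with h | h <;> linarith

lemma sum_lt_mul_add_eq_sum_mul_sum_ne {κ : Type*} [Fintype κ] [LinearOrder κ] (e : κ → κ → ℝ)
    (he : ∀ i j, e i j = e j i) (a : κ → ℝ) :
    ∑ p : κ × κ with p.1 < p.2, e p.1 p.2 * (a p.1 + a p.2)
      = ∑ i, a i * ∑ j with j ≠ i, e i j := by
  have hswap : ∑ p : κ × κ with p.1 < p.2, e p.1 p.2 * a p.2
      = ∑ p : κ × κ with p.2 < p.1, a p.1 * e p.1 p.2 :=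
    sum_equiv (Equiv.prodComm κ κ) (by simp) fun p _ => by simp [he p.1 p.2, mul_comm]
  have hsplit : ∑ i, a i * ∑ j with j ≠ i, e i j
      = ∑ p : κ × κ with p.1 < p.2, a p.1 * e p.1 p.2
        + ∑ p : κ × κ with p.2 < p.1, a p.1 * e p.1 p.2 := by
    rw [← sum_union (disjoint_filter.2 fun p _ h h' => lt_asymm h h'), ← filter_or]
    simp only [sum_filter, Fintype.sum_prod_type, mul_sum]
    refine sum_congr rfl fun i _ => sum_congr rfl fun j _ => ?_
    simp [ne_comm]
  rw [hsplit, ← hswap, ← sum_add_distrib]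
  exact sum_congr rfl fun p _ => by ring

section Graph

variable {n k : ℕ} (G : SimpleGraph (Fin n)) [DecidableRel G.Adj]

lemma pairCount_eq_sum_degIn (X Y : Finset (Fin n)) :
    pairCount G X Y = ∑ u ∈ X, degIn G Y u := by
  simp only [pairCount, degIn, card_filter]

lemma pairCount_comm (X Y : Finset (Fin n)) : pairCount G X Y = pairCount G Y X := by
  rw [pairCount, pairCount, sum_comm]
  simp only [G.adj_comm]

lemma sum_degIn_partSet (P : Fin n → Fin k) (v : Fin n) :
    ∑ j, degIn G (partSet P j) v = G.degree v := by
  rw [SimpleGraph.degree, SimpleGraph.neighborFinset_eq_filter,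
    card_eq_sum_card_fiberwise fun u _ => mem_univ (P u)]
  simp only [degIn, partSet, filter_filter, and_comm]

lemma lapMatrix_mulVec_partIndicator_apply (P : Fin n → Fin k) (j : Fin k) (v : Fin n) :
    (G.lapMatrix ℝ *ᵥ partIndicator P j) v
      = G.degree v * partIndicator P j v - degIn G (partSet P j) v := by
  rw [SimpleGraph.lapMatrix_mulVec_apply, degIn, partSet, filter_filter,
    SimpleGraph.neighborFinset_eq_filter]
  simp [partIndicator, sum_boole, filter_filter, and_comm]

lemma partIndicator_dotProduct_lapMatrix_mulVec (P : Fin n → Fin k) (i : Fin k) :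
    partIndicator P i ⬝ᵥ (G.lapMatrix ℝ *ᵥ partIndicator P i)
      = ∑ j with j ≠ i, (pairCount G (partSet P i) (partSet P j) : ℝ) := by
  calc partIndicator P i ⬝ᵥ (G.lapMatrix ℝ *ᵥ partIndicator P i)
      = ∑ v ∈ partSet P i, ((G.degree v : ℝ) - degIn G (partSet P i) v) := by
        rw [dotProduct_comm, dotProduct_partIndicator]
        refine sum_congr rfl fun v hv => ?_
        rw [lapMatrix_mulVec_partIndicator_apply, partIndicator, if_pos (mem_filter.1 hv).2,
          mul_one]
    _ = ∑ v ∈ partSet P i, ∑ j with j ≠ i, (degIn G (partSet P j) v : ℝ) := by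
        refine sum_congr rfl fun v _ => ?_
        rw [filter_ne', sum_erase_eq_sub (mem_univ i), ← sum_degIn_partSet G P v]
        push_cast
        rfl
    _ = ∑ j with j ≠ i, (pairCount G (partSet P i) (partSet P j) : ℝ) := by
        rw [sum_comm]
        simp [pairCount_eq_sum_degIn]

lemma sum_eigenvalues_mul_partMass_lapMatrix (hL : (G.lapMatrix ℝ).IsHermitian)
    (P : Fin n → Fin k) :
    ∑ m, hL.eigenvalues m * partMass P (hL.eigenvectorBasis m)
      = ∑ p ∈ univ.filter (fun p : Fin k × Fin k => p.1 < p.2),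
          (pairCount G (partSet P p.1) (partSet P p.2) : ℝ) *
            (1 / (partSet P p.1).card + 1 / (partSet P p.2).card) := by
  rw [hL.sum_eigenvalues_mul_partMass, sum_lt_mul_add_eq_sum_mul_sum_ne
    (fun i j => (pairCount G (partSet P i) (partSet P j) : ℝ))
    (fun i j => congrArg Nat.cast (pairCount_comm G _ _)) (fun i => 1 / ((partSet P i).card : ℝ))]
  refine sum_congr rfl fun i _ => ?_
  rw [partIndicator_dotProduct_lapMatrix_mulVec, one_div_mul_eq_div]
  rfl

end Graph

/-- if equality holds in
`λ₂ + ⋯ + λ_k ≤ ∑_{i<j} e(P i, P j)(1/|P i| + 1/|P j|)`, then the partition is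
semiequitable for `G`: for `i ≠ j`, vertices in the same part have the same
number of neighbours in the other part. -/
theorem stmt6 {n k : ℕ} (hk : 1 < k) (hkn : k < n)
    (G : SimpleGraph (Fin n)) [DecidableRel G.Adj]
    (hL : (G.lapMatrix ℝ).IsHermitian)
    (lam : Fin n → ℝ) (hmono : Monotone lam)
    (hperm : ∃ σ : Equiv.Perm (Fin n), lam = hL.eigenvalues ∘ σ)
    (P : Fin n → Fin k) (hsurj : Function.Surjective P)
    (heq : ∑ j ∈ Finset.univ.filter (fun j : Fin n => 1 ≤ (j : ℕ) ∧ (j : ℕ) < k), lam j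
      = ∑ p ∈ Finset.univ.filter (fun p : Fin k × Fin k => p.1 < p.2),
          (pairCount G (partSet P p.1) (partSet P p.2) : ℝ) *
            (1 / (partSet P p.1).card + 1 / (partSet P p.2).card)) :
    ∀ i j : Fin k, i ≠ j → ∀ u ∈ partSet P i, ∀ v ∈ partSet P i,
      degIn G (partSet P j) u = degIn G (partSet P j) v := by
  obtain ⟨σ, rfl⟩ := hperm
  set b := hL.eigenvectorBasis
  have hmass : ∑ t, hL.eigenvalues (σ t) * partMass P (b (σ t))
      ≤ ∑ t ∈ univ.filter fun t : Fin n => (t : ℕ) < k, hL.eigenvalues (σ t) := by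
    rw [Equiv.sum_comp σ (fun m => hL.eigenvalues m * partMass P (b m)),
      sum_eigenvalues_mul_partMass_lapMatrix, ← heq]
    exact sum_le_sum_of_subset_of_nonneg
      (fun t => by simp only [mem_filter, mem_univ, true_and]; omega)
      fun t _ _ => (SimpleGraph.posSemidef_lapMatrix ℝ G).eigenvalues_nonneg (σ t)
  have hweight := weight_eq_of_sum_mul_le_sum_lt (by omega) hkn.le hmono
    (fun t => partMass_nonneg P (b (σ t)))
    (fun t => (partMass_le_dotProduct_self P _).trans_eq (hL.eigenvectorBasis_dotProduct_self _))
    (by rw [Equiv.sum_comp σ (fun m => partMass P (b m)), hL.sum_partMass_eigenvectorBasis P hsurj,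
      Fintype.card_fin]) hmass
  intro i j hij u hu v hv
  have hPu : P u = i := (mem_filter.1 hu).2
  have hPv : P v = i := (mem_filter.1 hv).2
  have key := hL.mulVec_sub_smul_apply_eq (y := partIndicator P j) (u := u) (v := v)
    fun m hm hy => by
      obtain ⟨t, rfl⟩ := σ.surjective m
      rcases hm.lt_or_gt with hlt | hgt
      · exact apply_eq_apply_of_partMass_eq P
          ((hweight t).1 hlt ▸ (hL.eigenvectorBasis_dotProduct_self _).symm) (hPu.trans hPv.symm)
      · exact absurd (dotProduct_partIndicator_eq_zero_of_partMass_eq_zero P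
          ((hweight t).2 hgt) j) hy
  simpa [lapMatrix_mulVec_partIndicator_apply, partIndicator, hPu, hPv, hij] using key
end

section
/- Let G be a graph on [n] and [n] = P₁ ∪ ... ∪ P_k a partition such that each G[Pᵢ] is empty and each G[Pᵢ,Pⱼ] (i < j) is either empty or a complete bipartite graph. Then the adjacency matrix A(G) and its quotient matrix A(G)|P×P have exactly the same nonzero eigenvalues with the same multiplicities. -/
/-- The quotient matrix `A|P×Q` with entries
`b p q = (1/√(|P p||Q q|)) ∑_{i ∈ P p, j ∈ Q q} A i j`. -/
noncomputable def quotMat {m n k l : ℕ} (A : Matrix (Fin m) (Fin n) ℝ)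
    (P : Fin m → Fin k) (Q : Fin n → Fin l) : Matrix (Fin k) (Fin l) ℝ :=
  fun p q => (1 / Real.sqrt (((partSet P p).card : ℝ) * ((partSet Q q).card : ℝ))) *
    ∑ i ∈ partSet P p, ∑ j ∈ partSet Q q, A i j

/-!
Let `S` be the `n × k` matrix whose `p`-th column is the normalized indicator vector
`1_{P_p} / √|P_p|`. Its columns are orthonormal, so `SᵀS = 1`, and the hypotheses on `G` say
exactly that `A = A(G)` is constant on each block `P_p × P_q`; this gives `A = S B Sᵀ` with
`B = A|P×P`. Then `A = (S B) Sᵀ` and `Sᵀ (S B) = B`, and `XY`, `YX` always have the same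
nonzero eigenvalues with multiplicities, since `X^k χ_{XY} = X^n χ_{YX}`.
-/

open Matrix Polynomial

theorem Matrix.rootMultiplicity_charpoly_mul_comm {R m n : Type*} [CommRing R] [IsDomain R]
    [Fintype m] [DecidableEq m] [Fintype n] [DecidableEq n]
    (A : Matrix m n R) (B : Matrix n m R) {x : R} (hx : x ≠ 0) :
    (A * B).charpoly.rootMultiplicity x = (B * A).charpoly.rootMultiplicity x := by
  have hXpow : ∀ d : ℕ, ((X : R[X]) ^ d).rootMultiplicity x = 0 := fun d =>
    rootMultiplicity_eq_zero (by simp [hx])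
  have h := congrArg (rootMultiplicity x) (charpoly_mul_comm' A B)
  rwa [rootMultiplicity_mul (mul_ne_zero (pow_ne_zero _ X_ne_zero) (charpoly_monic _).ne_zero),
    rootMultiplicity_mul (mul_ne_zero (pow_ne_zero _ X_ne_zero) (charpoly_monic _).ne_zero),
    hXpow, hXpow, zero_add, zero_add] at h

section Partition

variable {n k : ℕ}

theorem mem_partSet {P : Fin n → Fin k} {p : Fin k} {i : Fin n} :
    i ∈ partSet P p ↔ P i = p := by
  simp [partSet]

variable (P : Fin n → Fin k)

def IsBlockConstant (A : Matrix (Fin n) (Fin n) ℝ) : Prop :=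
  ∀ i j u v, P u = P i → P v = P j → A u v = A i j

theorem card_partSet_pos (i : Fin n) : 0 < (partSet P (P i)).card :=
  Finset.card_pos.mpr ⟨i, mem_partSet.mpr rfl⟩

noncomputable def normalizedIndicator : Matrix (Fin n) (Fin k) ℝ :=
  of fun i p => if P i = p then (Real.sqrt (partSet P p).card)⁻¹ else 0

theorem normalizedIndicator_transpose_mul_self (hP : Function.Surjective P) :
    (normalizedIndicator P)ᵀ * normalizedIndicator P = 1 := by
  refine Matrix.ext fun p q => ?_
  simp only [mul_apply, transpose_apply, normalizedIndicator, of_apply]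
  by_cases hpq : p = q
  · subst hpq
    obtain ⟨i, rfl⟩ := hP p
    have hcard : (0 : ℝ) < (partSet P (P i)).card := by exact_mod_cast card_partSet_pos P i
    rw [one_apply_eq]
    simp_rw [ite_zero_mul_ite_zero, and_self, ← Finset.sum_filter]
    rw [Finset.sum_const, nsmul_eq_mul, ← mul_inv, Real.mul_self_sqrt hcard.le]
    exact mul_inv_cancel₀ hcard.ne'
  · rw [one_apply_ne hpq]
    refine Finset.sum_eq_zero fun i _ => ?_
    rw [ite_zero_mul_ite_zero, if_neg fun h => hpq (h.1.symm.trans h.2)]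

variable {P}

theorem IsBlockConstant.sum_partSet {A : Matrix (Fin n) (Fin n) ℝ}
    (hA : IsBlockConstant P A) (i j : Fin n) :
    ∑ u ∈ partSet P (P i), ∑ v ∈ partSet P (P j), A u v =
      (partSet P (P i)).card * (partSet P (P j)).card * A i j := by
  rw [Finset.sum_congr rfl fun u hu => Finset.sum_congr rfl fun v hv =>
    hA i j u v (mem_partSet.mp hu) (mem_partSet.mp hv)]
  simp only [Finset.sum_const, nsmul_eq_mul]
  ring

theorem IsBlockConstant.eq_normalizedIndicator_mul_quotMat_mul_transpose
    {A : Matrix (Fin n) (Fin n) ℝ} (hA : IsBlockConstant P A) :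
    A = normalizedIndicator P * quotMat A P P * (normalizedIndicator P)ᵀ := by
  ext i j
  simp only [mul_apply, transpose_apply, normalizedIndicator, of_apply, ite_mul, zero_mul,
    mul_ite, mul_zero, Finset.sum_ite_eq, Finset.mem_univ, if_true, quotMat,
    hA.sum_partSet]
  have ha : (0 : ℝ) < (partSet P (P i)).card := by exact_mod_cast card_partSet_pos P i
  have hb : (0 : ℝ) < (partSet P (P j)).card := by exact_mod_cast card_partSet_pos P j
  generalize ((partSet P (P i)).card : ℝ) = a at ha ⊢
  generalize ((partSet P (P j)).card : ℝ) = b at hb ⊢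
  rw [Real.sqrt_mul ha.le]
  field_simp
  rw [Real.sq_sqrt ha.le, Real.sq_sqrt hb.le]

end Partition

theorem SimpleGraph.isBlockConstant_adjMatrix {n k : ℕ} (G : SimpleGraph (Fin n))
    [DecidableRel G.Adj]
    (P : Fin n → Fin k) (hempty : ∀ u v : Fin n, P u = P v → ¬ G.Adj u v)
    (hcomp : ∀ i j : Fin k, i ≠ j →
      (∀ u v : Fin n, P u = i → P v = j → ¬ G.Adj u v) ∨
      (∀ u v : Fin n, P u = i → P v = j → G.Adj u v)) :
    IsBlockConstant P (G.adjMatrix ℝ) := by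
  intro i j u v hu hv
  suffices G.Adj u v ↔ G.Adj i j by simp only [adjMatrix_apply, this]
  by_cases hij : P i = P j
  · exact iff_of_false (hempty u v (by rw [hu, hv, hij])) (hempty i j hij)
  · rcases hcomp (P i) (P j) hij with h | h
    · exact iff_of_false (h u v hu hv) (h i j rfl rfl)
    · exact iff_of_true (h u v hu hv) (h i j rfl rfl)

/-- if each `G[P i]` is empty and each `G[P i, P j]` (`i ≠ j`) is empty
or complete bipartite, then `A(G)` and its quotient matrix have exactly the same
nonzero eigenvalues with the same multiplicities (stated via root multiplicities
of the characteristic polynomials). -/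
theorem stmt7 {n k : ℕ} (G : SimpleGraph (Fin n)) [DecidableRel G.Adj]
    (P : Fin n → Fin k) (hsurj : Function.Surjective P)
    (hempty : ∀ u v : Fin n, P u = P v → ¬ G.Adj u v)
    (hcomp : ∀ i j : Fin k, i ≠ j →
      (∀ u v : Fin n, P u = i → P v = j → ¬ G.Adj u v) ∨
      (∀ u v : Fin n, P u = i → P v = j → G.Adj u v)) :
    ∀ x : ℝ, x ≠ 0 →
      (G.adjMatrix ℝ).charpoly.rootMultiplicity x
        = (quotMat (G.adjMatrix ℝ) P P).charpoly.rootMultiplicity x := by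
  intro x hx
  set S := normalizedIndicator P
  have hA : G.adjMatrix ℝ = S * quotMat (G.adjMatrix ℝ) P P * Sᵀ :=
    (G.isBlockConstant_adjMatrix P hempty hcomp).eq_normalizedIndicator_mul_quotMat_mul_transpose
  conv_lhs => rw [hA]
  rw [rootMultiplicity_charpoly_mul_comm _ _ hx, ← Matrix.mul_assoc,
    normalizedIndicator_transpose_mul_self P hsurj, Matrix.one_mul]
end

section
/- For any n×n Hermitian matrix A and any partition P of [n] into k nonempty parts, the eigenvalues of the quotient matrix B = A|P×P interlace those of A: μᵢ(A) ≥ μᵢ(B) ≥ μ_{n-k+i}(A) for all i ∈ [k]. -/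
/-- Complex quotient matrix `A|P×Q`. -/
noncomputable def quotMatC {m n k l : ℕ} (A : Matrix (Fin m) (Fin n) ℂ)
    (P : Fin m → Fin k) (Q : Fin n → Fin l) : Matrix (Fin k) (Fin l) ℂ :=
  fun p q => ((1 / Real.sqrt (((partSet P p).card : ℝ) * ((partSet Q q).card : ℝ)) : ℝ) : ℂ) *
    ∑ i ∈ partSet P p, ∑ j ∈ partSet Q q, A i j

open scoped InnerProductSpace
open Module Submodule Matrix

namespace OrthonormalBasis

variable {𝕜 E F ι κ : Type*} [RCLike 𝕜] [NormedAddCommGroup E] [InnerProductSpace 𝕜 E]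
  [NormedAddCommGroup F] [InnerProductSpace 𝕜 F] [Fintype ι] [Fintype κ]

lemma inner_eq_zero_of_mem_span_image (b : OrthonormalBasis ι 𝕜 E) {s : Set ι} {x : E}
    (hx : x ∈ span 𝕜 (b '' s)) {j : ι} (hj : j ∉ s) : ⟪b j, x⟫_𝕜 = 0 := by
  have := b.toBasis.mem_span_image.mp (by rwa [b.coe_toBasis]) |>.mt hj
  rwa [Finset.mem_coe, Finsupp.mem_support_iff, not_not, b.coe_toBasis_repr_apply,
    b.repr_apply_apply] at this

lemma finrank_span_image (b : OrthonormalBasis ι 𝕜 E) (s : Finset ι) :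
    finrank 𝕜 (span 𝕜 (b '' s)) = s.card := by
  rw [Set.image_eq_range]
  exact (finrank_span_eq_card (b.orthonormal.linearIndependent.comp _ Subtype.val_injective)).trans
    (Fintype.card_coe s)

lemma exists_ne_zero_mem_span_image_map_mem_span_image (f : OrthonormalBasis ι 𝕜 E)
    (g : OrthonormalBasis κ 𝕜 F) (S : F →ₗᵢ[𝕜] E) {s : Finset ι} {t : Finset κ}
    (hst : Fintype.card ι < s.card + t.card) :
    ∃ y ≠ 0, y ∈ span 𝕜 (g '' t) ∧ S y ∈ span 𝕜 (f '' s) := by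
  have := Module.Finite.of_basis f.toBasis
  set W := (span 𝕜 (g '' t)).map S.toLinearMap
  have hW : finrank 𝕜 W = t.card :=
    (equivMapOfInjective _ S.injective _).finrank_eq.symm.trans (g.finrank_span_image t)
  have hE : finrank 𝕜 E = Fintype.card ι := finrank_eq_card_basis f.toBasis
  have hpos : 0 < finrank 𝕜 ↥(W ⊓ span 𝕜 (f '' s)) := by
    have := finrank_sup_add_finrank_inf_eq W (span 𝕜 (f '' s))
    have := (W ⊔ span 𝕜 (f '' s)).finrank_le
    rw [f.finrank_span_image] at *
    omega
  obtain ⟨x, hxW, hx0⟩ := exists_mem_ne_zero_of_ne_bot (one_le_finrank_iff.mp hpos)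
  obtain ⟨⟨y, hy, rfl⟩, hx⟩ := mem_inf.mp hxW
  exact ⟨y, fun h => hx0 (by simp [h]), hy, hx⟩

variable {b : OrthonormalBasis ι 𝕜 E} {T : E →ₗ[𝕜] E} {μ : ι → ℝ}

lemma re_inner_apply_eq_sum (hT : ∀ j, T (b j) = (μ j : 𝕜) • b j) (x : E) :
    RCLike.re ⟪x, T x⟫_𝕜 = ∑ j, μ j * ‖⟪b j, x⟫_𝕜‖ ^ 2 := by
  have hTx : T x = ∑ j, ((μ j : 𝕜) * ⟪b j, x⟫_𝕜) • b j := by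
    conv_lhs => rw [← b.sum_repr' x]
    simp only [map_sum, map_smul, hT, smul_smul, mul_comm]
  rw [hTx, inner_sum, map_sum]
  refine Finset.sum_congr rfl fun j _ => ?_
  rw [inner_smul_right, ← inner_conj_symm x (b j), mul_assoc, RCLike.mul_conj]
  norm_cast

lemma re_inner_apply_le_of_mem_span_image (hT : ∀ j, T (b j) = (μ j : 𝕜) • b j) {s : Set ι}
    {c : ℝ} (hc : ∀ j ∈ s, μ j ≤ c) {x : E} (hx : x ∈ span 𝕜 (b '' s)) :
    RCLike.re ⟪x, T x⟫_𝕜 ≤ c * ‖x‖ ^ 2 := by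
  rw [re_inner_apply_eq_sum hT, ← b.sum_sq_norm_inner_right, Finset.mul_sum]
  refine Finset.sum_le_sum fun j _ => ?_
  by_cases hj : j ∈ s
  · exact mul_le_mul_of_nonneg_right (hc j hj) (sq_nonneg _)
  · simp [b.inner_eq_zero_of_mem_span_image hx hj]

lemma le_re_inner_apply_of_mem_span_image (hT : ∀ j, T (b j) = (μ j : 𝕜) • b j) {s : Set ι}
    {c : ℝ} (hc : ∀ j ∈ s, c ≤ μ j) {x : E} (hx : x ∈ span 𝕜 (b '' s)) :
    c * ‖x‖ ^ 2 ≤ RCLike.re ⟪x, T x⟫_𝕜 := by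
  rw [re_inner_apply_eq_sum hT, ← b.sum_sq_norm_inner_right, Finset.mul_sum]
  refine Finset.sum_le_sum fun j _ => ?_
  by_cases hj : j ∈ s
  · exact mul_le_mul_of_nonneg_right (hc j hj) (sq_nonneg _)
  · simp [b.inner_eq_zero_of_mem_span_image hx hj]

variable {g : OrthonormalBasis κ 𝕜 F} {U : F →ₗ[𝕜] F} {ν : κ → ℝ} {S : F →ₗᵢ[𝕜] E}

lemma le_of_compression (hT : ∀ j, T (b j) = (μ j : 𝕜) • b j)
    (hU : ∀ j, U (g j) = (ν j : 𝕜) • g j) (hSU : ∀ y, ⟪S y, T (S y)⟫_𝕜 = ⟪y, U y⟫_𝕜)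
    {s : Finset ι} {t : Finset κ} (hst : Fintype.card ι < s.card + t.card) {a c : ℝ}
    (ha : ∀ j ∈ t, a ≤ ν j) (hc : ∀ j ∈ s, μ j ≤ c) : a ≤ c := by
  obtain ⟨y, hy0, hy, hSy⟩ := exists_ne_zero_mem_span_image_map_mem_span_image b g S hst
  refine le_of_mul_le_mul_right ?_ (pow_pos (norm_pos_iff.mpr hy0) 2)
  calc a * ‖y‖ ^ 2 ≤ RCLike.re ⟪y, U y⟫_𝕜 := le_re_inner_apply_of_mem_span_image hU ha hy
    _ = RCLike.re ⟪S y, T (S y)⟫_𝕜 := by rw [hSU]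
    _ ≤ c * ‖S y‖ ^ 2 := re_inner_apply_le_of_mem_span_image hT hc hSy
    _ = c * ‖y‖ ^ 2 := by rw [S.norm_map]

theorem eigenvalues_interlace_of_compression {n k : ℕ} (hkn : k ≤ n)
    {f : OrthonormalBasis (Fin n) 𝕜 E} {g : OrthonormalBasis (Fin k) 𝕜 F} {μ : Fin n → ℝ}
    {ν : Fin k → ℝ} (hμ : Antitone μ) (hν : Antitone ν) (hT : ∀ j, T (f j) = (μ j : 𝕜) • f j)
    (hU : ∀ j, U (g j) = (ν j : 𝕜) • g j) (hSU : ∀ y, ⟪S y, T (S y)⟫_𝕜 = ⟪y, U y⟫_𝕜)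
    (i : Fin k) : ν i ≤ μ (Fin.castLE hkn i) ∧ μ ⟨n - k + i, by omega⟩ ≤ ν i := by
  constructor
  · refine le_of_compression hT hU hSU (s := Finset.Ici (Fin.castLE hkn i)) (t := Finset.Iic i)
      ?_ (fun j hj => hν (Finset.mem_Iic.mp hj)) (fun j hj => hμ (Finset.mem_Ici.mp hj))
    simp only [Fintype.card_fin, Fin.card_Ici, Fin.card_Iic, Fin.val_castLE]
    omega
  · -- the lower bound is the upper bound for the compression of `-T` to `-U`
    have hT' : ∀ j, (-T) (f j) = ((-μ j : ℝ) : 𝕜) • f j := by simp [hT]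
    have hU' : ∀ j, (-U) (g j) = ((-ν j : ℝ) : 𝕜) • g j := by simp [hU]
    have hSU' : ∀ y, ⟪S y, (-T) (S y)⟫_𝕜 = ⟪y, (-U) y⟫_𝕜 := by simp [hSU]
    refine neg_le_neg_iff.mp (le_of_compression hT' hU' hSU' (t := Finset.Ici i)
      (s := Finset.Iic ⟨n - k + i, by omega⟩) ?_
      (fun j hj => neg_le_neg (hν (Finset.mem_Ici.mp hj)))
      (fun j hj => neg_le_neg (hμ (Finset.mem_Iic.mp hj))))
    simp only [Fintype.card_fin, Fin.card_Ici, Fin.card_Iic]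
    omega

end OrthonormalBasis

namespace Matrix

variable {𝕜 m n : Type*} [RCLike 𝕜] [Fintype m] [Fintype n] [DecidableEq n]

lemma IsHermitian.toEuclideanLin_eigenvectorBasis_s9 {A : Matrix n n 𝕜} (hA : A.IsHermitian)
    (j : n) :
    A.toEuclideanLin (hA.eigenvectorBasis j) = (hA.eigenvalues j : 𝕜) • hA.eigenvectorBasis j := by
  rw [toLpLin_apply, hA.mulVec_eigenvectorBasis, ← RCLike.real_smul_eq_coe_smul]
  rfl

variable [DecidableEq m]

lemma inner_toEuclideanLin_apply_toEuclideanLin (M : Matrix m n 𝕜) (A : Matrix m m 𝕜)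
    (x y : EuclideanSpace 𝕜 n) :
    ⟪M.toEuclideanLin x, A.toEuclideanLin (M.toEuclideanLin y)⟫_𝕜 =
      ⟪x, (Mᴴ * A * M).toEuclideanLin y⟫_𝕜 := by
  rw [← LinearMap.adjoint_inner_right, ← toEuclideanLin_conjTranspose_eq_adjoint,
    Matrix.mul_assoc, toLpLin_mul, toLpLin_mul]
  rfl

noncomputable def toEuclideanLinearIsometry (M : Matrix m n 𝕜) (hM : Mᴴ * M = 1) :
    EuclideanSpace 𝕜 n →ₗᵢ[𝕜] EuclideanSpace 𝕜 m :=
  M.toEuclideanLin.isometryOfInner fun x y => by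
    simpa [hM] using M.inner_toEuclideanLin_apply_toEuclideanLin 1 x y

end Matrix

noncomputable def normalizedCharMat {n k : ℕ} (P : Fin n → Fin k) : Matrix (Fin n) (Fin k) ℂ :=
  of fun i p => if P i = p then (((√(partSet P p).card)⁻¹ : ℝ) : ℂ) else 0

section NormalizedCharMat

variable {m n k l : ℕ} {α : Type*}

lemma mul_normalizedCharMat_apply (B : Matrix α (Fin n) ℂ) (Q : Fin n → Fin l) (a : α)
    (q : Fin l) :
    (B * normalizedCharMat Q) a q =
      (∑ j ∈ partSet Q q, B a j) * (((√(partSet Q q).card)⁻¹ : ℝ) : ℂ) := by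
  simp [mul_apply, normalizedCharMat, mul_ite, partSet, Finset.sum_filter, Finset.sum_mul]

lemma conjTranspose_normalizedCharMat_mul_apply (B : Matrix (Fin m) α ℂ) (P : Fin m → Fin k)
    (p : Fin k) (a : α) :
    ((normalizedCharMat P)ᴴ * B) p a =
      (((√(partSet P p).card)⁻¹ : ℝ) : ℂ) * ∑ i ∈ partSet P p, B i a := by
  simp [mul_apply, normalizedCharMat, apply_ite (starRingEnd ℂ), ite_mul, partSet,
    Finset.sum_filter, Finset.mul_sum]

lemma conjTranspose_normalizedCharMat_mul_mul (A : Matrix (Fin m) (Fin n) ℂ)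
    (P : Fin m → Fin k) (Q : Fin n → Fin l) :
    (normalizedCharMat P)ᴴ * A * normalizedCharMat Q = quotMatC A P Q := by
  ext p q
  simp only [mul_normalizedCharMat_apply, conjTranspose_normalizedCharMat_mul_apply, quotMatC,
    ← Finset.mul_sum, Finset.sum_comm (s := partSet Q q)]
  rw [one_div, Real.sqrt_mul (Nat.cast_nonneg _), mul_inv]
  push_cast
  ring

lemma conjTranspose_normalizedCharMat_mul_self {P : Fin n → Fin k}
    (hP : Function.Surjective P) : (normalizedCharMat P)ᴴ * normalizedCharMat P = 1 := by
  ext p q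
  have hcol : ∀ i ∈ partSet P p, normalizedCharMat P i q =
      if p = q then (((√(partSet P p).card)⁻¹ : ℝ) : ℂ) else 0 := by
    intro i hi
    rw [partSet, Finset.mem_filter] at hi
    by_cases hpq : p = q <;> simp [normalizedCharMat, hi.2, hpq]
  rw [conjTranspose_normalizedCharMat_mul_apply, Finset.sum_congr rfl hcol, Finset.sum_const,
    one_apply]
  split_ifs with hpq
  · have hcard : (0 : ℝ) < (partSet P p).card := by
      obtain ⟨i, rfl⟩ := hP p
      exact_mod_cast Finset.card_pos.mpr ⟨i, by simp [partSet]⟩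
    rw [nsmul_eq_mul, ← mul_assoc, mul_comm, ← mul_assoc]
    norm_cast
    rw [← mul_inv, Real.mul_self_sqrt hcard.le, inv_mul_cancel₀ hcard.ne']
  · simp

end NormalizedCharMat

/-- Haemers: the eigenvalues of the quotient matrix `B = A|P×P`
interlace those of the Hermitian matrix `A`: for all `i ∈ [k]`,
`μ i (A) ≥ μ i (B) ≥ μ (n-k+i) (A)` (0-based indexing). -/
theorem stmt9 {n k : ℕ} (hkn : k < n)
    (A : Matrix (Fin n) (Fin n) ℂ) (hA : A.IsHermitian)
    (P : Fin n → Fin k) (hsurj : Function.Surjective P)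
    (hB : (quotMatC A P P).IsHermitian)
    (μ : Fin n → ℝ) (hμmono : Antitone μ)
    (hμperm : ∃ σ : Equiv.Perm (Fin n), μ = hA.eigenvalues ∘ σ)
    (ν : Fin k → ℝ) (hνmono : Antitone ν)
    (hνperm : ∃ τ : Equiv.Perm (Fin k), ν = hB.eigenvalues ∘ τ) :
    ∀ i : Fin k, ν i ≤ μ (Fin.castLE hkn.le i) ∧
      μ ⟨n - k + (i : ℕ), by omega⟩ ≤ ν i := by
  obtain ⟨σ, rfl⟩ := hμperm
  obtain ⟨τ, rfl⟩ := hνperm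
  exact OrthonormalBasis.eigenvalues_interlace_of_compression hkn.le hμmono hνmono
    (f := hA.eigenvectorBasis.reindex σ.symm) (g := hB.eigenvectorBasis.reindex τ.symm)
    (S := (normalizedCharMat P).toEuclideanLinearIsometry
      (conjTranspose_normalizedCharMat_mul_self hsurj))
    (fun j => by simpa using hA.toEuclideanLin_eigenvectorBasis_s9 (σ j))
    (fun j => by simpa using hB.toEuclideanLin_eigenvectorBasis_s9 (τ j))
    (fun y => by
      rw [toEuclideanLinearIsometry, LinearMap.coe_isometryOfInner,
        inner_toEuclideanLin_apply_toEuclideanLin, conjTranspose_normalizedCharMat_mul_mul])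
end

section
/- Let A be an n×n Hermitian matrix, P = {P₁,...,P_k} a partition of [n], and suppose the quotient matrix B = A|P×P has an eigenvector y = (y₁,...,y_k) for eigenvalue μ such that P×P is equitable for A. Then the vector x ∈ ℂⁿ defined by x_i = y_s/√|P_s| for i ∈ P_s is an eigenvector of A with eigenvalue μ. Consequently, every eigenvalue of A|P×P is an eigenvalue of A. -/
/-- Every block `A[P p, P q]` has constant row sums and constant column sums. -/
def BlockRegularC {m n k l : ℕ} (A : Matrix (Fin m) (Fin n) ℂ)
    (P : Fin m → Fin k) (Q : Fin n → Fin l) : Prop :=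
  ∀ p q, (∀ i ∈ partSet P p, ∀ i' ∈ partSet P p,
      ∑ j ∈ partSet Q q, A i j = ∑ j ∈ partSet Q q, A i' j) ∧
    (∀ j ∈ partSet Q q, ∀ j' ∈ partSet Q q,
      ∑ i ∈ partSet P p, A i j = ∑ i ∈ partSet P p, A i j')

lemma lift_eig {n k : ℕ} (A : Matrix (Fin n) (Fin n) ℂ)
    (P : Fin n → Fin k) (hsurj : Function.Surjective P)
    (hequit : BlockRegularC A P P)
    (μ : ℂ) (y : Fin k → ℂ) (hy : y ≠ 0)
    (hvec : (quotMatC A P P).mulVec y = μ • y) :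
    A.mulVec (fun i => y (P i) / (Real.sqrt ((partSet P (P i)).card) : ℂ))
        = μ • (fun i => y (P i) / (Real.sqrt ((partSet P (P i)).card) : ℂ))
      ∧ (fun i => y (P i) / (Real.sqrt ((partSet P (P i)).card) : ℂ)) ≠ 0 := by
  have hmem : ∀ i : Fin n, i ∈ partSet P (P i) := by
    intro i; simp [partSet]
  have hpos : ∀ p : Fin k, 0 < ((partSet P p).card : ℝ) := by
    intro p
    obtain ⟨i, hi⟩ := hsurj p
    have : i ∈ partSet P p := by simp [partSet, hi]
    have := Finset.card_pos.mpr ⟨i, this⟩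
    exact_mod_cast this
  have hsqrt : ∀ p : Fin k, (0:ℝ) < Real.sqrt ((partSet P p).card : ℝ) :=
    fun p => Real.sqrt_pos.mpr (hpos p)
  have hsqC : ∀ p : Fin k, ((Real.sqrt ((partSet P p).card : ℝ) : ℂ)) ≠ 0 := by
    intro p; exact_mod_cast (hsqrt p).ne'
  -- row sums
  have hrow : ∀ (i : Fin n) (q : Fin k),
      ((partSet P (P i)).card : ℂ) * ∑ j ∈ partSet P q, A i j
        = ∑ i' ∈ partSet P (P i), ∑ j ∈ partSet P q, A i' j := by
    intro i q
    rw [Finset.sum_congr rfl (fun i' hi' => ((hequit (P i) q).1 i' hi' i (hmem i)))]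
    simp [Finset.sum_const, mul_comm]
  constructor
  · funext i
    have key := congrFun hvec (P i)
    simp only [Matrix.mulVec, dotProduct, quotMatC, Pi.smul_apply, smul_eq_mul] at key ⊢
    -- split the sum over j into fibers
    have hfib : ∑ j, A i j * (y (P j) / (Real.sqrt ((partSet P (P j)).card) : ℂ))
        = ∑ q, ∑ j ∈ partSet P q, A i j * (y q / (Real.sqrt ((partSet P q).card) : ℂ)) := by
      rw [← Finset.sum_fiberwise Finset.univ P
        (fun j => A i j * (y (P j) / (Real.sqrt ((partSet P (P j)).card) : ℂ)))]
      refine Finset.sum_congr rfl fun q _ => Finset.sum_congr rfl fun j hj => ?_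
      have : P j = q := by simpa [partSet] using hj
      rw [this]
    rw [hfib]
    set p := P i with hp
    have hkey2 : ∑ q, (((1 / Real.sqrt (((partSet P p).card : ℝ) * ((partSet P q).card : ℝ)) : ℝ) : ℂ) *
        ∑ i' ∈ partSet P p, ∑ j ∈ partSet P q, A i' j) * y q = μ * y p := key
    have goal2 : ∀ q : Fin k,
        ∑ j ∈ partSet P q, A i j * (y q / (Real.sqrt ((partSet P q).card) : ℂ))
          = ((((1 / Real.sqrt (((partSet P p).card : ℝ) * ((partSet P q).card : ℝ)) : ℝ) : ℂ) *
            ∑ i' ∈ partSet P p, ∑ j ∈ partSet P q, A i' j) * y q) / (Real.sqrt ((partSet P p).card) : ℂ) := by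
      intro q
      have hcne : ((partSet P p).card : ℂ) ≠ 0 := by
        exact_mod_cast (hpos p).ne'
      have hS : (∑ j ∈ partSet P q, A i j)
          = (∑ i' ∈ partSet P p, ∑ j ∈ partSet P q, A i' j) / ((partSet P p).card : ℂ) := by
        rw [eq_div_iff hcne, mul_comm]
        exact hrow i q
      have hcp : ((partSet P p).card : ℂ)
          = (Real.sqrt ((partSet P p).card) : ℂ) * (Real.sqrt ((partSet P p).card) : ℂ) := by
        norm_cast
        rw [Real.mul_self_sqrt (hpos p).le]
      have hcast : ((1 / Real.sqrt (((partSet P p).card : ℝ) * ((partSet P q).card : ℝ)) : ℝ) : ℂ)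
          = 1 / ((Real.sqrt ((partSet P p).card) : ℂ) * (Real.sqrt ((partSet P q).card) : ℂ)) := by
        rw [Real.sqrt_mul (hpos p).le]
        push_cast
        ring
      rw [← Finset.sum_mul, hS, hcast, hcp]
      field_simp
    calc ∑ q, ∑ j ∈ partSet P q, A i j * (y q / (Real.sqrt ((partSet P q).card) : ℂ))
        = (∑ q, (((1 / Real.sqrt (((partSet P p).card : ℝ) * ((partSet P q).card : ℝ)) : ℝ) : ℂ) *
            ∑ i' ∈ partSet P p, ∑ j ∈ partSet P q, A i' j) * y q) / (Real.sqrt ((partSet P p).card) : ℂ) := by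
          rw [Finset.sum_div]; exact Finset.sum_congr rfl fun q _ => goal2 q
      _ = μ * y p / (Real.sqrt ((partSet P p).card) : ℂ) := by rw [hkey2]
      _ = μ * (y p / (Real.sqrt ((partSet P p).card) : ℂ)) := by ring
  · intro hx
    obtain ⟨p, hp⟩ := Function.ne_iff.mp hy
    obtain ⟨i, hi⟩ := hsurj p
    have := congrFun hx i
    simp only [hi, Pi.zero_apply, div_eq_zero_iff] at this
    rcases this with h | h
    · exact hp h
    · exact hsqC p h

/-- if `P×P` is equitable for the Hermitian matrix `A` and `y` is an
eigenvector of the quotient `B = A|P×P` with eigenvalue `μ`, then the lifted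
vector `x i = y (P i) / √|P_{P i}|` is an eigenvector of `A` with eigenvalue `μ`;
consequently every eigenvalue of `A|P×P` is an eigenvalue of `A`. -/
theorem stmt18 {n k : ℕ} (A : Matrix (Fin n) (Fin n) ℂ) (hA : A.IsHermitian)
    (P : Fin n → Fin k) (hsurj : Function.Surjective P)
    (hequit : BlockRegularC A P P)
    (μ : ℂ) (y : Fin k → ℂ) (hy : y ≠ 0)
    (hvec : (quotMatC A P P).mulVec y = μ • y) :
    (A.mulVec (fun i => y (P i) / (Real.sqrt ((partSet P (P i)).card) : ℂ))
        = μ • (fun i => y (P i) / (Real.sqrt ((partSet P (P i)).card) : ℂ))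
      ∧ (fun i => y (P i) / (Real.sqrt ((partSet P (P i)).card) : ℂ)) ≠ 0)
    ∧ ∀ μ' : ℂ, (∃ z : Fin k → ℂ, z ≠ 0 ∧ (quotMatC A P P).mulVec z = μ' • z) →
        ∃ w : Fin n → ℂ, w ≠ 0 ∧ A.mulVec w = μ' • w := by
  refine ⟨lift_eig A P hsurj hequit μ y hy hvec, ?_⟩
  intro μ' ⟨z, hz, hzvec⟩
  exact ⟨_, (lift_eig A P hsurj hequit μ' z hz hzvec).2,
    (lift_eig A P hsurj hequit μ' z hz hzvec).1⟩
end
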